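/- arXiv:1801.03013 — 9 statements merged into one kernel-verified Lean document; each statement's English description precedes it below -/
import Mathlib

section
/- Information Lemma (Lemma 4.1 / L:Stab). Let h : ℝ^m → (−∞,+∞] be proper, let F : ℝ^n → ℝ^m be continuous, let d̄ > 0 and let Z ⊆ ℝ^n be a set containing {x ∈ ℝ^n : dist(F(x), dom h) ≤ d̄}. Let (x^k)_{k≥0} in ℝ^n, (u^k)_{k≥1} in dom h, (y^k)_{k≥0} in ℝ^m and penalty parameters ρ_k > 0 satisfy: (i) y^k = y^{k−1} + ρ_{k−1}(F(x^k) − u^k) for all k ≥ 1; (ii) (ρ_k) is nondecreasing and there is δ > 0 such that ρ_{k+1} ≥ ρ_k + δ whenever x^{k+1} ∉ Z; (iii) the sequence (y^k) is bounded. Then there exists an index K ∈ ℕ such that x^k ∈ Z for all k ≥ K. -/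
/-!
Each multiplier update gives `ρₖ ‖F(xᵏ⁺¹) - uᵏ⁺¹‖ = ‖yᵏ⁺¹ - yᵏ‖ ≤ 2M`, and `uᵏ⁺¹ ∈ dom h`, so
`dist(F(xᵏ⁺¹), dom h) ≤ 2M / ρₖ`. If `ρ` ever exceeds `2M / d̄`, monotonicity keeps every later
iterate in `Z`. Otherwise `ρ` is bounded, and since each iterate outside `Z` raises `ρ` by `δ`,
only finitely many iterates can lie outside `Z`.
-/

theorem exists_forall_ge_of_bddAbove_of_le_add_of_not {ρ : ℕ → ℝ} {P : ℕ → Prop} {δ : ℝ}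
    (hmono : Monotone ρ) (hδ : 0 < δ) (hstep : ∀ k, ¬P (k + 1) → ρ k + δ ≤ ρ (k + 1))
    (hbdd : BddAbove (Set.range ρ)) : ∃ K, ∀ k, K ≤ k → P k := by
  by_contra! hfreq
  have hgrow : ∀ j : ℕ, ∃ k, ρ 0 + j * δ ≤ ρ k := by
    intro j
    induction j with
    | zero => exact ⟨0, by simp⟩
    | succ j ih =>
      obtain ⟨k, hk⟩ := ih
      obtain ⟨k', hk', hnot⟩ := hfreq (k + 1)
      obtain ⟨i, rfl⟩ : ∃ i, k' = i + 1 := ⟨k' - 1, by omega⟩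
      refine ⟨i + 1, ?_⟩
      have := hmono (show k ≤ i by omega)
      push_cast
      linarith [hstep i hnot]
  obtain ⟨B, hB⟩ := hbdd
  obtain ⟨j, hj⟩ := exists_nat_gt ((B - ρ 0) / δ)
  obtain ⟨k, hk⟩ := hgrow j
  have := hB ⟨k, rfl⟩
  rw [div_lt_iff₀ hδ] at hj
  linarith

theorem mul_norm_le_two_mul_of_eq_add_smul {E : Type*} [SeminormedAddCommGroup E]
    [NormedSpace ℝ E] {a b v : E} {r M : ℝ} (hab : b = a + r • v) (ha : ‖a‖ ≤ M) (hb : ‖b‖ ≤ M)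
    (hr : 0 ≤ r) : r * ‖v‖ ≤ 2 * M :=
  calc r * ‖v‖ = ‖b - a‖ := by
        rw [hab, add_sub_cancel_left, norm_smul, Real.norm_of_nonneg hr]
    _ ≤ ‖b‖ + ‖a‖ := norm_sub_le b a
    _ ≤ 2 * M := by linarith

theorem information_lemma_general {n m : ℕ}
    (h : EuclideanSpace ℝ (Fin m) → EReal)
    (F : EuclideanSpace ℝ (Fin n) → EuclideanSpace ℝ (Fin m))
    (dbar : ℝ) (hdbar : 0 < dbar)
    (Z : Set (EuclideanSpace ℝ (Fin n)))
    (hZ : {x | Metric.infDist (F x) {u | h u ≠ ⊤} ≤ dbar} ⊆ Z)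
    (x : ℕ → EuclideanSpace ℝ (Fin n)) (u y : ℕ → EuclideanSpace ℝ (Fin m))
    (ρ : ℕ → ℝ) (hρpos : ∀ k, 0 < ρ k)
    (hu : ∀ k, 1 ≤ k → h (u k) ≠ ⊤)
    (hmult : ∀ k, 1 ≤ k → y k = y (k - 1) + ρ (k - 1) • (F (x k) - u k))
    (hmono : Monotone ρ) (δ : ℝ) (hδ : 0 < δ)
    (hstep : ∀ k, x (k + 1) ∉ Z → ρ k + δ ≤ ρ (k + 1))
    (M : ℝ) (hM : ∀ k, ‖y k‖ ≤ M) :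
    ∃ K : ℕ, ∀ k, K ≤ k → x k ∈ Z := by
  by_cases hbdd : BddAbove (Set.range ρ)
  · exact exists_forall_ge_of_bddAbove_of_le_add_of_not hmono hδ hstep hbdd
  obtain ⟨_, ⟨K, rfl⟩, hK⟩ := not_bddAbove_iff.mp hbdd (2 * M / dbar)
  refine ⟨K + 1, fun k hk => ?_⟩
  obtain ⟨j, rfl⟩ : ∃ j, k = j + 1 := ⟨k - 1, by omega⟩
  have hresidual : ρ j * ‖F (x (j + 1)) - u (j + 1)‖ ≤ ρ j * dbar :=
    calc ρ j * ‖F (x (j + 1)) - u (j + 1)‖ ≤ 2 * M :=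
          mul_norm_le_two_mul_of_eq_add_smul (by simpa using hmult (j + 1) j.succ_pos) (hM j)
            (hM (j + 1)) (hρpos j).le
      _ ≤ ρ K * dbar := (div_le_iff₀ hdbar).mp hK.le
      _ ≤ ρ j * dbar := by gcongr; exact hmono (by omega)
  apply hZ
  calc Metric.infDist (F (x (j + 1))) {u | h u ≠ ⊤}
      ≤ dist (F (x (j + 1))) (u (j + 1)) := Metric.infDist_le_dist_of_mem (hu (j + 1) j.succ_pos)
    _ ≤ dbar := by rw [dist_eq_norm]; exact le_of_mul_le_mul_left hresidual (hρpos j)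

/-- **Information Lemma** (Lemma 4.1). If the multiplier sequence is bounded and the penalty
parameter increases by at least `δ` whenever an iterate is outside the information zone `Z`,
then all iterates eventually lie in `Z`. -/
theorem information_lemma {n m : ℕ}
    (h : EuclideanSpace ℝ (Fin m) → EReal)
    (hproper : ∃ u, h u ≠ ⊤) (hnobot : ∀ u, h u ≠ ⊥)
    (F : EuclideanSpace ℝ (Fin n) → EuclideanSpace ℝ (Fin m)) (hF : Continuous F)
    (dbar : ℝ) (hdbar : 0 < dbar)
    (Z : Set (EuclideanSpace ℝ (Fin n)))
    (hZ : {x | Metric.infDist (F x) {u | h u ≠ ⊤} ≤ dbar} ⊆ Z)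
    (x : ℕ → EuclideanSpace ℝ (Fin n)) (u y : ℕ → EuclideanSpace ℝ (Fin m))
    (ρ : ℕ → ℝ) (hρpos : ∀ k, 0 < ρ k)
    (hu : ∀ k, 1 ≤ k → h (u k) ≠ ⊤)
    (hmult : ∀ k, 1 ≤ k → y k = y (k - 1) + ρ (k - 1) • (F (x k) - u k))
    (hmono : Monotone ρ) (δ : ℝ) (hδ : 0 < δ)
    (hstep : ∀ k, x (k + 1) ∉ Z → ρ k + δ ≤ ρ (k + 1))
    (M : ℝ) (hM : ∀ k, ‖y k‖ ≤ M) :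
    ∃ K : ℕ, ∀ k, K ≤ k → x k ∈ Z :=
  information_lemma_general h F dbar hdbar Z hZ x u y ρ hρpos hu hmult hmono δ hδ hstep M hM
end

section
/- Descent/ascent balance for the augmented Lagrangian (Lemma 4.2 / L:DescentProperty, one-step form). Let f₀ : ℝ^n → ℝ and F : ℝ^n → ℝ^m be continuously differentiable, h : ℝ^m → (−∞,+∞] proper lsc, ρ > 0, a > 0. Suppose points x, x⁺ ∈ ℝ^n, u, u⁺, y ∈ ℝ^m satisfy (a/2)‖x⁺ − x‖² + L_ρ(x⁺, u⁺, y) ≤ L_ρ(x, u, y), and define y⁺ := y + ρ(F(x⁺) − u⁺). Then L_ρ(x⁺, u⁺, y⁺) + (a/2)‖x⁺ − x‖² ≤ L_ρ(x, u, y) + (1/ρ)‖y⁺ − y‖². -/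
open scoped InnerProductSpace

/-- The augmented Lagrangian `L_ρ(x,u,y) = f₀(x) + h(u) + ⟨y, F(x) − u⟩ + (ρ/2)‖F(x) − u‖²`,
with values in `(−∞,+∞]` (modelled in `EReal`). -/
noncomputable def augLag {n m : ℕ} (f₀ : EuclideanSpace ℝ (Fin n) → ℝ)
    (F : EuclideanSpace ℝ (Fin n) → EuclideanSpace ℝ (Fin m))
    (h : EuclideanSpace ℝ (Fin m) → EReal) (ρ : ℝ)
    (x : EuclideanSpace ℝ (Fin n)) (u y : EuclideanSpace ℝ (Fin m)) : EReal :=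
  ((f₀ x + ⟪y, F x - u⟫_ℝ + ρ / 2 * ‖F x - u‖ ^ 2 : ℝ) : EReal) + h u

section

variable {n m : ℕ} (f₀ : EuclideanSpace ℝ (Fin n) → ℝ)
  (F : EuclideanSpace ℝ (Fin n) → EuclideanSpace ℝ (Fin m))
  (h : EuclideanSpace ℝ (Fin m) → EReal) (ρ : ℝ)
  (x : EuclideanSpace ℝ (Fin n)) (u : EuclideanSpace ℝ (Fin m))

theorem augLag_add_multiplier (y z : EuclideanSpace ℝ (Fin m)) :
    augLag f₀ F h ρ x u (y + z) = ((⟪z, F x - u⟫_ℝ : ℝ) : EReal) + augLag f₀ F h ρ x u y := by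
  unfold augLag
  rw [← add_assoc, ← EReal.coe_add, inner_add_left]
  congr 2
  ring

theorem augLag_multiplier_step (y : EuclideanSpace ℝ (Fin m)) :
    augLag f₀ F h ρ x u (y + ρ • (F x - u))
      = ((ρ * ‖F x - u‖ ^ 2 : ℝ) : EReal) + augLag f₀ F h ρ x u y := by
  rw [augLag_add_multiplier, real_inner_smul_left, real_inner_self_eq_norm_sq]

end

theorem inv_mul_norm_smul_sq {E : Type*} [NormedAddCommGroup E] [NormedSpace ℝ E]
    (ρ : ℝ) (v : E) : 1 / ρ * ‖ρ • v‖ ^ 2 = ρ * ‖v‖ ^ 2 := by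
  rw [norm_smul, mul_pow, Real.norm_eq_abs, sq_abs, one_div, ← mul_assoc, sq, ← mul_assoc,
    inv_mul_mul_self]

theorem descent_ascent_balance_general {n m : ℕ}
    (f₀ : EuclideanSpace ℝ (Fin n) → ℝ)
    (F : EuclideanSpace ℝ (Fin n) → EuclideanSpace ℝ (Fin m))
    (h : EuclideanSpace ℝ (Fin m) → EReal)
    (ρ a : ℝ)
    (x xp : EuclideanSpace ℝ (Fin n)) (u up y yp : EuclideanSpace ℝ (Fin m))
    (hdesc : ((a / 2 * ‖xp - x‖ ^ 2 : ℝ) : EReal) + augLag f₀ F h ρ xp up y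
      ≤ augLag f₀ F h ρ x u y)
    (hyp : yp = y + ρ • (F xp - up)) :
    augLag f₀ F h ρ xp up yp + ((a / 2 * ‖xp - x‖ ^ 2 : ℝ) : EReal)
      ≤ augLag f₀ F h ρ x u y + ((1 / ρ * ‖yp - y‖ ^ 2 : ℝ) : EReal) := by
  subst hyp
  rw [add_sub_cancel_left, inv_mul_norm_smul_sq, augLag_multiplier_step]
  set c : EReal := ((ρ * ‖F xp - up‖ ^ 2 : ℝ) : EReal)
  calc c + augLag f₀ F h ρ xp up y + ((a / 2 * ‖xp - x‖ ^ 2 : ℝ) : EReal)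
      = c + (((a / 2 * ‖xp - x‖ ^ 2 : ℝ) : EReal) + augLag f₀ F h ρ xp up y) := by
        rw [add_assoc, add_comm (augLag _ _ _ _ _ _ _)]
    _ ≤ c + augLag f₀ F h ρ x u y := by gcongr
    _ = augLag f₀ F h ρ x u y + c := add_comm _ _

/-- **Descent/ascent balance for the augmented Lagrangian** (Lemma 4.2, one-step form):
if `(a/2)‖x⁺ − x‖² + L_ρ(x⁺,u⁺,y) ≤ L_ρ(x,u,y)` and `y⁺ = y + ρ(F(x⁺) − u⁺)`, then
`L_ρ(x⁺,u⁺,y⁺) + (a/2)‖x⁺ − x‖² ≤ L_ρ(x,u,y) + (1/ρ)‖y⁺ − y‖²`. -/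
theorem descent_ascent_balance {n m : ℕ}
    (f₀ : EuclideanSpace ℝ (Fin n) → ℝ) (hf₀ : ContDiff ℝ 1 f₀)
    (F : EuclideanSpace ℝ (Fin n) → EuclideanSpace ℝ (Fin m)) (hF : ContDiff ℝ 1 F)
    (h : EuclideanSpace ℝ (Fin m) → EReal)
    (hproper : ∃ u, h u ≠ ⊤) (hnobot : ∀ u, h u ≠ ⊥) (hlsc : LowerSemicontinuous h)
    (ρ a : ℝ) (hρ : 0 < ρ) (ha : 0 < a)
    (x xp : EuclideanSpace ℝ (Fin n)) (u up y yp : EuclideanSpace ℝ (Fin m))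
    (hdesc : ((a / 2 * ‖xp - x‖ ^ 2 : ℝ) : EReal) + augLag f₀ F h ρ xp up y
      ≤ augLag f₀ F h ρ x u y)
    (hyp : yp = y + ρ • (F xp - up)) :
    augLag f₀ F h ρ xp up yp + ((a / 2 * ‖xp - x‖ ^ 2 : ℝ) : EReal)
      ≤ augLag f₀ F h ρ x u y + ((1 / ρ * ‖yp - y‖ ^ 2 : ℝ) : EReal) :=
  descent_ascent_balance_general f₀ F h ρ a x xp u up y yp hdesc hyp
end

section
/- Dual step bounded by primal steps (Lemma 4.3 / L:DualSequence). Let f₀ : ℝ^n → ℝ and F : ℝ^n → ℝ^m be continuously differentiable, S ⊆ ℝ^n, and assume: ‖∇F(x)ᵀ v‖ ≥ γ‖v‖ for all x ∈ S and v ∈ ℝ^m (uniform regularity with constant γ > 0); the Jacobian map x ↦ ∇F(x) is L_F-Lipschitz on S (operator norm); ∇f₀ is L₀-Lipschitz on S. Let x⁻, x, x⁺ ∈ ℝ^n with x, x⁺ ∈ S, and y⁻, y, y⁺ ∈ ℝ^m with ‖y‖ ≤ Λ. If ‖∇f₀(x⁺) + ∇F(x⁺)ᵀ y⁺‖ ≤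 b‖x⁺ − x‖ and ‖∇f₀(x) + ∇F(x)ᵀ y‖ ≤ b‖x − x⁻‖ for some b > 0, then γ‖y⁺ − y‖ ≤ (L₀ + L_F Λ + b)‖x⁺ − x‖ + b‖x − x⁻‖, and consequently ‖y⁺ − y‖² ≤ d₁‖x⁺ − x‖² + d₂‖x − x⁻‖² with d₁ = (2/γ²)(L₀ + L_F Λ + b)² and d₂ = 2b²/γ². -/
/-!
Subtracting the two stationarity residuals at `x⁺` and `x` and inserting `∇F(x⁺)ᵀ y` gives
`∇F(x⁺)ᵀ (y⁺ - y) = r⁺ - r - (∇f₀(x⁺) - ∇f₀(x)) - (∇F(x⁺) - ∇F(x))ᵀ y`, where `r⁺`, `r` are the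
residuals. Uniform regularity bounds the left side from below by `γ ‖y⁺ - y‖`, and the Lipschitz
bounds together with `‖y‖ ≤ Λ` bound the right side. The squared form follows from
`(p + q)² ≤ 2p² + 2q²`.
-/

open ContinuousLinearMap

theorem ContinuousLinearMap.norm_apply_sub_le_residuals {𝕜 E F : Type*} [NontriviallyNormedField 𝕜]
    [SeminormedAddCommGroup E] [SeminormedAddCommGroup F] [NormedSpace 𝕜 E] [NormedSpace 𝕜 F]
    (T T' : F →L[𝕜] E) (g g' : E) (y y' : F) :
    ‖T (y' - y)‖ ≤ ‖g' + T y'‖ + ‖g + T' y‖ + ‖g' - g‖ + ‖T - T'‖ * ‖y‖ := by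
  have hsplit : T (y' - y) = (g' + T y') - (g + T' y) - (g' - g) - (T - T') y := by
    simp only [map_sub, sub_apply]
    abel
  calc ‖T (y' - y)‖
      ≤ ‖g' + T y'‖ + ‖g + T' y‖ + ‖g' - g‖ + ‖(T - T') y‖ := by
        rw [hsplit]
        linarith [norm_sub_le ((g' + T y') - (g + T' y) - (g' - g)) ((T - T') y),
          norm_sub_le ((g' + T y') - (g + T' y)) (g' - g), norm_sub_le (g' + T y') (g + T' y)]
    _ ≤ ‖g' + T y'‖ + ‖g + T' y‖ + ‖g' - g‖ + ‖T - T'‖ * ‖y‖ := by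
        gcongr
        exact le_opNorm _ _

theorem sq_le_of_mul_le_add {γ t a u c w : ℝ} (hγ : 0 < γ) (ht : 0 ≤ t)
    (h : γ * t ≤ a * u + c * w) :
    t ^ 2 ≤ 2 / γ ^ 2 * a ^ 2 * u ^ 2 + 2 * c ^ 2 / γ ^ 2 * w ^ 2 := by
  have hsq : (γ * t) ^ 2 ≤ 2 * (a * u) ^ 2 + 2 * (c * w) ^ 2 := by
    nlinarith [pow_le_pow_left₀ (by positivity) h 2, sq_nonneg (a * u - c * w)]
  rw [show 2 / γ ^ 2 * a ^ 2 * u ^ 2 + 2 * c ^ 2 / γ ^ 2 * w ^ 2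
      = (2 * (a * u) ^ 2 + 2 * (c * w) ^ 2) / γ ^ 2 by ring, le_div_iff₀ (by positivity)]
  linarith [mul_pow γ t 2]

theorem dual_step_bound_general {n m : ℕ}
    (f₀ : EuclideanSpace ℝ (Fin n) → ℝ)
    (F : EuclideanSpace ℝ (Fin n) → EuclideanSpace ℝ (Fin m))
    (S : Set (EuclideanSpace ℝ (Fin n)))
    (γ LF L₀ Λ b : ℝ) (hγ : 0 < γ)
    (hreg : ∀ x ∈ S, ∀ v : EuclideanSpace ℝ (Fin m),
      γ * ‖v‖ ≤ ‖(ContinuousLinearMap.adjoint (fderiv ℝ F x)) v‖)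
    (hLF : ∀ x ∈ S, ∀ x' ∈ S, ‖fderiv ℝ F x - fderiv ℝ F x'‖ ≤ LF * ‖x - x'‖)
    (hL0 : ∀ x ∈ S, ∀ x' ∈ S, ‖gradient f₀ x - gradient f₀ x'‖ ≤ L₀ * ‖x - x'‖)
    (xm x xp : EuclideanSpace ℝ (Fin n)) (hx : x ∈ S) (hxp : xp ∈ S)
    (y yp : EuclideanSpace ℝ (Fin m)) (hΛ : ‖y‖ ≤ Λ)
    (h1 : ‖gradient f₀ xp + (ContinuousLinearMap.adjoint (fderiv ℝ F xp)) yp‖ ≤ b * ‖xp - x‖)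
    (h2 : ‖gradient f₀ x + (ContinuousLinearMap.adjoint (fderiv ℝ F x)) y‖ ≤ b * ‖x - xm‖) :
    γ * ‖yp - y‖ ≤ (L₀ + LF * Λ + b) * ‖xp - x‖ + b * ‖x - xm‖ ∧
    ‖yp - y‖ ^ 2 ≤ (2 / γ ^ 2) * (L₀ + LF * Λ + b) ^ 2 * ‖xp - x‖ ^ 2
      + (2 * b ^ 2 / γ ^ 2) * ‖x - xm‖ ^ 2 := by
  have hadj : ‖adjoint (fderiv ℝ F xp) - adjoint (fderiv ℝ F x)‖ ≤ LF * ‖xp - x‖ := by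
    rw [← map_sub, LinearIsometryEquiv.norm_map]
    exact hLF xp hxp x hx
  have hmult : ‖adjoint (fderiv ℝ F xp) - adjoint (fderiv ℝ F x)‖ * ‖y‖ ≤ LF * ‖xp - x‖ * Λ :=
    mul_le_mul hadj hΛ (norm_nonneg _) ((norm_nonneg _).trans hadj)
  have hfirst : γ * ‖yp - y‖ ≤ (L₀ + LF * Λ + b) * ‖xp - x‖ + b * ‖x - xm‖ := by
    have := (hreg xp hxp (yp - y)).trans
      (norm_apply_sub_le_residuals _ (adjoint (fderiv ℝ F x)) (gradient f₀ x) (gradient f₀ xp) y yp)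
    linarith [hL0 xp hxp x hx]
  exact ⟨hfirst, sq_le_of_mul_le_add hγ (norm_nonneg _) hfirst⟩

/-- **Dual step bounded by primal steps** (Lemma 4.3). Under uniform regularity of `F` on `S`
with constant `γ`, Lipschitz continuity of the Jacobian `∇F` and of `∇f₀` on `S`, boundedness
of the multiplier `y`, and the gradient bounds coming from condition C2, the dual displacement
is controlled by the last two primal displacements. -/
theorem dual_step_bound {n m : ℕ}
    (f₀ : EuclideanSpace ℝ (Fin n) → ℝ) (hf₀ : ContDiff ℝ 1 f₀)
    (F : EuclideanSpace ℝ (Fin n) → EuclideanSpace ℝ (Fin m)) (hF : ContDiff ℝ 1 F)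
    (S : Set (EuclideanSpace ℝ (Fin n)))
    (γ LF L₀ Λ b : ℝ) (hγ : 0 < γ) (hb : 0 < b)
    (hreg : ∀ x ∈ S, ∀ v : EuclideanSpace ℝ (Fin m),
      γ * ‖v‖ ≤ ‖(ContinuousLinearMap.adjoint (fderiv ℝ F x)) v‖)
    (hLF : ∀ x ∈ S, ∀ x' ∈ S, ‖fderiv ℝ F x - fderiv ℝ F x'‖ ≤ LF * ‖x - x'‖)
    (hL0 : ∀ x ∈ S, ∀ x' ∈ S, ‖gradient f₀ x - gradient f₀ x'‖ ≤ L₀ * ‖x - x'‖)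
    (xm x xp : EuclideanSpace ℝ (Fin n)) (hx : x ∈ S) (hxp : xp ∈ S)
    (ym y yp : EuclideanSpace ℝ (Fin m)) (hΛ : ‖y‖ ≤ Λ)
    (h1 : ‖gradient f₀ xp + (ContinuousLinearMap.adjoint (fderiv ℝ F xp)) yp‖ ≤ b * ‖xp - x‖)
    (h2 : ‖gradient f₀ x + (ContinuousLinearMap.adjoint (fderiv ℝ F x)) y‖ ≤ b * ‖x - xm‖) :
    γ * ‖yp - y‖ ≤ (L₀ + LF * Λ + b) * ‖xp - x‖ + b * ‖x - xm‖ ∧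
    ‖yp - y‖ ^ 2 ≤ (2 / γ ^ 2) * (L₀ + LF * Λ + b) ^ 2 * ‖xp - x‖ ^ 2
      + (2 * b ^ 2 / γ ^ 2) * ‖x - xm‖ ^ 2 :=
  dual_step_bound_general f₀ F S γ LF L₀ Λ b hγ hreg hLF hL0 xm x xp hx hxp y yp hΛ h1 h2
end

section
/- Sufficient decrease of the Lyapunov function (inequality (4.12) in the proof of Lemma 4.4). Let f₀ : ℝ^n → ℝ and F : ℝ^n → ℝ^m be continuously differentiable, h : ℝ^m → (−∞,+∞] proper lsc, ρ > 0, a > 0, d₁, d₂ ≥ 0. Let x⁻, x, x⁺ ∈ ℝ^n and u, u⁺, y ∈ ℝ^m with u, u⁺ ∈ dom h, set y⁺ := y + ρ(F(x⁺) − u⁺) and β := d₂/ρ. If (a/2)‖x⁺ − x‖² + L_ρ(x⁺, u⁺, y) ≤ L_ρ(x, u, y) and ‖y⁺ − y‖² ≤ d₁‖x⁺ − x‖² + d₂‖x − x⁻‖², then E_β(x, u, y, x⁻) − E_β(x⁺, u⁺, y⁺, x) ≥ (a/2 − (d₁ + d₂)/ρ)‖x⁺ − x‖², where E_β(x,u,y,w)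 := L_ρ(x,u,y) + β‖x − w‖². -/
/-!
The multiplier update `y⁺ = y + ρ(F x⁺ − u⁺)` raises `L_ρ(x⁺,u⁺,·)` by exactly
`ρ‖F x⁺ − u⁺‖² = ‖y⁺ − y‖²/ρ`, which the dual estimate bounds by `(d₁‖x⁺ − x‖² + d₂‖x − x⁻‖²)/ρ`;
the weight `β = d₂/ρ` of the Lyapunov term is chosen so that the `d₂‖x − x⁻‖²/ρ` part is
absorbed by `E_β(x,u,y,x⁻)`. Every correction is a real number added to `L_ρ`, so all comparisons
are made by monotonicity of addition in `EReal`.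
-/

open scoped InnerProductSpace

/-- The Lyapunov function `E_{β,ρ}(x,u,y,w) = L_ρ(x,u,y) + β‖x − w‖²`. -/
noncomputable def lyap {n m : ℕ} (f₀ : EuclideanSpace ℝ (Fin n) → ℝ)
    (F : EuclideanSpace ℝ (Fin n) → EuclideanSpace ℝ (Fin m))
    (h : EuclideanSpace ℝ (Fin m) → EReal) (ρ β : ℝ)
    (x : EuclideanSpace ℝ (Fin n)) (u y : EuclideanSpace ℝ (Fin m))
    (w : EuclideanSpace ℝ (Fin n)) : EReal :=
  augLag f₀ F h ρ x u y + ((β * ‖x - w‖ ^ 2 : ℝ) : EReal)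

theorem augLag_add_smul_residual {n m : ℕ} (f₀ : EuclideanSpace ℝ (Fin n) → ℝ)
    (F : EuclideanSpace ℝ (Fin n) → EuclideanSpace ℝ (Fin m))
    (h : EuclideanSpace ℝ (Fin m) → EReal) (ρ : ℝ)
    (x : EuclideanSpace ℝ (Fin n)) (u y : EuclideanSpace ℝ (Fin m)) :
    augLag f₀ F h ρ x u (y + ρ • (F x - u))
      = augLag f₀ F h ρ x u y + ((ρ * ‖F x - u‖ ^ 2 : ℝ) : EReal) := by
  have hinner : ⟪y + ρ • (F x - u), F x - u⟫_ℝ = ⟪y, F x - u⟫_ℝ + ρ * ‖F x - u‖ ^ 2 := by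
    rw [inner_add_left, real_inner_smul_left, real_inner_self_eq_norm_sq]
  rw [augLag, augLag, hinner, add_right_comm _ (h u), ← EReal.coe_add]
  congr 2
  ring

theorem mul_norm_sq_le_div_of_norm_smul_sq_le {E : Type*} [SeminormedAddCommGroup E]
    [NormedSpace ℝ E] {ρ c : ℝ} {v : E} (hρ : 0 < ρ) (hv : ‖ρ • v‖ ^ 2 ≤ c) :
    ρ * ‖v‖ ^ 2 ≤ c / ρ := by
  rw [norm_smul, Real.norm_of_nonneg hρ.le] at hv
  rw [le_div_iff₀ hρ]
  linarith

theorem lyapunov_sufficient_decrease_general {n m : ℕ}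
    (f₀ : EuclideanSpace ℝ (Fin n) → ℝ)
    (F : EuclideanSpace ℝ (Fin n) → EuclideanSpace ℝ (Fin m))
    (h : EuclideanSpace ℝ (Fin m) → EReal)
    (ρ a d₁ d₂ : ℝ) (hρ : 0 < ρ)
    (xm x xp : EuclideanSpace ℝ (Fin n)) (u up y yp : EuclideanSpace ℝ (Fin m))
    (hyp : yp = y + ρ • (F xp - up))
    (hdesc : ((a / 2 * ‖xp - x‖ ^ 2 : ℝ) : EReal) + augLag f₀ F h ρ xp up y
      ≤ augLag f₀ F h ρ x u y)
    (hdual : ‖yp - y‖ ^ 2 ≤ d₁ * ‖xp - x‖ ^ 2 + d₂ * ‖x - xm‖ ^ 2) :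
    lyap f₀ F h ρ (d₂ / ρ) xp up yp x
        + (((a / 2 - (d₁ + d₂) / ρ) * ‖xp - x‖ ^ 2 : ℝ) : EReal)
      ≤ lyap f₀ F h ρ (d₂ / ρ) x u y xm := by
  subst hyp
  rw [add_sub_cancel_left] at hdual
  have hresidual := mul_norm_sq_le_div_of_norm_smul_sq_le hρ hdual
  have hreal : ρ * ‖F xp - up‖ ^ 2 + d₂ / ρ * ‖xp - x‖ ^ 2
        + (a / 2 - (d₁ + d₂) / ρ) * ‖xp - x‖ ^ 2
      ≤ a / 2 * ‖xp - x‖ ^ 2 + d₂ / ρ * ‖x - xm‖ ^ 2 := by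
    linear_combination hresidual
  calc lyap f₀ F h ρ (d₂ / ρ) xp up (y + ρ • (F xp - up)) x
        + (((a / 2 - (d₁ + d₂) / ρ) * ‖xp - x‖ ^ 2 : ℝ) : EReal)
      = augLag f₀ F h ρ xp up y + ((ρ * ‖F xp - up‖ ^ 2 + d₂ / ρ * ‖xp - x‖ ^ 2
          + (a / 2 - (d₁ + d₂) / ρ) * ‖xp - x‖ ^ 2 : ℝ) : EReal) := by
        rw [lyap, augLag_add_smul_residual, EReal.coe_add, EReal.coe_add, add_assoc, add_assoc,
          add_assoc]
    _ ≤ augLag f₀ F h ρ xp up y + ((a / 2 * ‖xp - x‖ ^ 2 + d₂ / ρ * ‖x - xm‖ ^ 2 : ℝ) : EReal) :=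
        add_le_add_right (EReal.coe_le_coe_iff.mpr hreal) _
    _ = ((a / 2 * ‖xp - x‖ ^ 2 : ℝ) : EReal) + augLag f₀ F h ρ xp up y
          + ((d₂ / ρ * ‖x - xm‖ ^ 2 : ℝ) : EReal) := by
        rw [EReal.coe_add, ← add_assoc, add_comm (augLag _ _ _ _ _ _ _)]
    _ ≤ lyap f₀ F h ρ (d₂ / ρ) x u y xm := add_le_add_left hdesc _

/-- **Sufficient decrease of the Lyapunov function** (inequality (4.12)). With `β = d₂/ρ`,
if `(a/2)‖x⁺ − x‖² + L_ρ(x⁺,u⁺,y) ≤ L_ρ(x,u,y)` and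
`‖y⁺ − y‖² ≤ d₁‖x⁺ − x‖² + d₂‖x − x⁻‖²` where `y⁺ = y + ρ(F(x⁺) − u⁺)`, then
`E_β(x,u,y,x⁻) − E_β(x⁺,u⁺,y⁺,x) ≥ (a/2 − (d₁ + d₂)/ρ)‖x⁺ − x‖²`
(stated additively, all values being finite). -/
theorem lyapunov_sufficient_decrease {n m : ℕ}
    (f₀ : EuclideanSpace ℝ (Fin n) → ℝ) (hf₀ : ContDiff ℝ 1 f₀)
    (F : EuclideanSpace ℝ (Fin n) → EuclideanSpace ℝ (Fin m)) (hF : ContDiff ℝ 1 F)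
    (h : EuclideanSpace ℝ (Fin m) → EReal)
    (hproper : ∃ u, h u ≠ ⊤) (hnobot : ∀ u, h u ≠ ⊥) (hlsc : LowerSemicontinuous h)
    (ρ a d₁ d₂ : ℝ) (hρ : 0 < ρ) (ha : 0 < a) (hd₁ : 0 ≤ d₁) (hd₂ : 0 ≤ d₂)
    (xm x xp : EuclideanSpace ℝ (Fin n)) (u up y yp : EuclideanSpace ℝ (Fin m))
    (hu : h u ≠ ⊤) (hup : h up ≠ ⊤)
    (hyp : yp = y + ρ • (F xp - up))
    (hdesc : ((a / 2 * ‖xp - x‖ ^ 2 : ℝ) : EReal) + augLag f₀ F h ρ xp up y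
      ≤ augLag f₀ F h ρ x u y)
    (hdual : ‖yp - y‖ ^ 2 ≤ d₁ * ‖xp - x‖ ^ 2 + d₂ * ‖x - xm‖ ^ 2) :
    lyap f₀ F h ρ (d₂ / ρ) xp up yp x
        + (((a / 2 - (d₁ + d₂) / ρ) * ‖xp - x‖ ^ 2 : ℝ) : EReal)
      ≤ lyap f₀ F h ρ (d₂ / ρ) x u y xm :=
  lyapunov_sufficient_decrease_general f₀ F h ρ a d₁ d₂ hρ xm x xp u up y yp hyp hdesc hdual
end

section
/- Finite stabilization of the penalty sequence (Lemma 4.4 / L:SufficentDecrease). Let f₀, F, h be as in model (CM), let Z be an information zone with parameter d̄ > 0 (i.e. {x : dist(F(x), dom h) ≤ d̄} ⊆ Z) on which F is uniformly regular with constant γ > 0, ∇F is L_F-Lipschitz, and ∇f₀ is L₀-Lipschitz. Let a, b > 0, τ ∈ (0, a/2), δ > 0, ρ₀ > 0, and let sequences (x^k), (u^k) ⊆ dom h, (y^k), (ρ_k) with ρ_k ≥ ρ₀ satisfy for all k: (i) y^{k+1} = y^k + ρ_k(F(x^{k+1}) − u^{k+1}); (ii) (a/2)‖x^{k+1} − x^k‖²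 + L_{ρ_k}(x^{k+1}, u^{k+1}, y^k) ≤ L_{ρ_k}(x^k, u^k, y^k); (iii) ‖∇f₀(x^{k+1}) + ∇F(x^{k+1})ᵀ(y^k + ρ_k(F(x^{k+1}) − u^{k+1}))‖ ≤ b‖x^{k+1} − x^k‖; (iv) with β_k := 2b²/(ρ_k γ²), ρ_{k+1} = ρ_k + δ if x^{k+1} ∉ Z or τ‖x^{k+1} − x^k‖² > E_{β_k,ρ_k}(x^k, u^k, y^k, x^{k−1}) − E_{β_k,ρ_k}(x^{k+1}, u^{k+1}, y^{k+1}, x^k), and ρ_{k+1} = ρ_k otherwise; (v) (y^k) is bounded. Then there exists an index K such that ρ_k = ρ_K for all k ≥ K, and moreover for all k ≥ K: x^k ∈ Z and τ‖x^{k+1} − x^k‖² ≤ E_{β_K,ρ_K}(x^k, u^k, y^k, x^{k−1}) − E_{β_K,ρ_K}(x^{k+1}, u^{k+1}, y^{k+1}, x^k). -/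
open scoped InnerProductSpace

/-!
Since `‖y^k‖ ≤ M`, the multiplier update gives `‖F(x^{k+1}) − u^{k+1}‖ = ‖y^{k+1} − y^k‖ / ρ_k ≤ 2M / ρ_k`,
so `x^{k+1} ∈ Z` once `ρ_k ≥ 2M / d̄`. On `Z`, uniform regularity of `F`, the stationarity bounds (iii)
and the Lipschitz constants give `γ‖y^{k+1} − y^k‖ ≤ c‖x^{k+1} − x^k‖ + b‖x^k − x^{k−1}‖` with
`c = b + L₀ + L_F M`; together with (ii) this yields the `τ`-decrease of `E_{β_k,ρ_k}` as soon as
`ρ_k ≥ (2c² + 2b²) / (γ²(a/2 − τ))`. So once `ρ` exceeds the larger threshold `R` it never grows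
again, and otherwise it stays below `R`; either way the nondecreasing sequence `ρ_k`, which moves in
steps of `δ`, is eventually constant, and from then on the test (iv) is always passed.
-/

open Filter
open scoped Topology

section PenaltySequence

variable {ρ : ℕ → ℝ} {δ R : ℝ}

theorem eventually_succ_eq_of_bddAbove (hδ : 0 < δ)
    (hstep : ∀ k, ρ (k + 1) = ρ k ∨ ρ (k + 1) = ρ k + δ) (hbdd : BddAbove (Set.range ρ)) :
    ∀ᶠ k in atTop, ρ (k + 1) = ρ k := by
  have hmono : Monotone ρ :=
    monotone_nat_of_le_succ fun k => by rcases hstep k with h | h <;> linarith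
  have hlim := tendsto_atTop_ciSup hmono hbdd
  have hgap : Tendsto (fun k => ρ (k + 1) - ρ k) atTop (𝓝 0) := by
    simpa using (hlim.comp (tendsto_add_atTop_nat 1)).sub hlim
  filter_upwards [hgap.eventually (gt_mem_nhds hδ)] with k hk
  exact (hstep k).resolve_right fun h => by simp only [h] at hk; linarith

theorem exists_forall_ge_eq_of_stalls_above (hδ : 0 < δ)
    (hstep : ∀ k, ρ (k + 1) = ρ k ∨ ρ (k + 1) = ρ k + δ)
    (hstall : ∀ k, R ≤ ρ k → R ≤ ρ (k + 1) → ρ (k + 2) = ρ (k + 1)) :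
    ∃ K, ∀ k ≥ K, ρ k = ρ K := by
  have hmono : Monotone ρ :=
    monotone_nat_of_le_succ fun k => by rcases hstep k with h | h <;> linarith
  obtain ⟨K, hK⟩ : ∃ K, ∀ k ≥ K, ρ (k + 1) = ρ k := by
    by_cases hR : ∃ i, R ≤ ρ i
    · obtain ⟨i, hi⟩ := hR
      refine ⟨i + 1, fun k hk => ?_⟩
      obtain ⟨j, rfl⟩ : ∃ j, k = j + 1 := ⟨k - 1, by omega⟩
      exact hstall j (hi.trans (hmono (by omega))) (hi.trans (hmono (by omega)))
    · push Not at hR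
      exact eventually_atTop.1 <| eventually_succ_eq_of_bddAbove hδ hstep
        ⟨R, by rintro _ ⟨k, rfl⟩; exact (hR k).le⟩
  exact ⟨K, Nat.le_induction rfl fun k hk ih => (hK k hk).trans ih⟩

theorem exists_forall_ge_of_adaptive_penalty {P : ℕ → Prop} (hδ : 0 < δ)
    (hinc : ∀ k, 1 ≤ k → ¬P k → ρ (k + 1) = ρ k + δ) (hkeep : ∀ k, 1 ≤ k → P k → ρ (k + 1) = ρ k)
    (hP : ∀ k, R ≤ ρ k → R ≤ ρ (k + 1) → P (k + 1)) :
    ∃ K, 1 ≤ K ∧ ∀ k ≥ K, ρ k = ρ K ∧ P (k - 1) ∧ P k := by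
  have hP_of_eq k (hk : 1 ≤ k) (heq : ρ (k + 1) = ρ k) : P k :=
    by_contra fun h => by linarith [hinc k hk h]
  obtain ⟨K, hK⟩ := exists_forall_ge_eq_of_stalls_above (ρ := fun k => ρ (k + 1)) hδ
    (fun k => (em (P (k + 1))).imp (hkeep _ k.succ_pos) (hinc _ k.succ_pos))
    (fun k h₁ h₂ => hkeep (k + 2) (by omega) (hP (k + 1) h₁ h₂))
  have hconst k (hk : K + 1 ≤ k) : ρ k = ρ (K + 1) := by
    obtain ⟨j, rfl⟩ : ∃ j, k = j + 1 := ⟨k - 1, by omega⟩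
    exact hK j (by omega)
  refine ⟨K + 2, by omega, fun k hk => ⟨?_, hP_of_eq _ (by omega) ?_, hP_of_eq _ (by omega) ?_⟩⟩
  · rw [hconst k (by omega), hconst (K + 2) (by omega)]
  · rw [Nat.sub_add_cancel (by omega), hconst k (by omega), hconst (k - 1) (by omega)]
  · rw [hconst k (by omega), hconst (k + 1) (by omega)]

end PenaltySequence

theorem norm_le_of_eq_add_smul {E : Type*} [NormedAddCommGroup E] [NormedSpace ℝ E]
    {y y' v : E} {ρ M d : ℝ} (hρ : 0 < ρ) (hv : y' = y + ρ • v) (hy : ‖y‖ ≤ M) (hy' : ‖y'‖ ≤ M)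
    (hd : 2 * M ≤ d * ρ) : ‖v‖ ≤ d := by
  have hρv : ρ * ‖v‖ = ‖y' - y‖ := by
    rw [hv, add_sub_cancel_left, norm_smul, Real.norm_of_nonneg hρ.le]
  have := norm_sub_le y' y
  nlinarith

theorem mul_norm_sub_le_of_stationarity {E G : Type*}
    [NormedAddCommGroup E] [InnerProductSpace ℝ E] [CompleteSpace E]
    [NormedAddCommGroup G] [InnerProductSpace ℝ G] [CompleteSpace G]
    {A A' : E →L[ℝ] G} {g g' : E} {y y' : G} {γ b L₀ LF M s s' : ℝ}
    (hreg : ∀ v, γ * ‖v‖ ≤ ‖ContinuousLinearMap.adjoint A' v‖)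
    (hstat : ‖g + ContinuousLinearMap.adjoint A y‖ ≤ b * s)
    (hstat' : ‖g' + ContinuousLinearMap.adjoint A' y'‖ ≤ b * s')
    (hg : ‖g' - g‖ ≤ L₀ * s') (hA : ‖A' - A‖ ≤ LF * s') (hy : ‖y‖ ≤ M) :
    γ * ‖y' - y‖ ≤ (b + L₀ + LF * M) * s' + b * s := by
  have hsplit : ContinuousLinearMap.adjoint A' (y' - y)
      = (g' + ContinuousLinearMap.adjoint A' y') - (g + ContinuousLinearMap.adjoint A y)
        - (g' - g) - ContinuousLinearMap.adjoint (A' - A) y := by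
    simp only [map_sub, sub_apply]
    abel
  have hAy : ‖ContinuousLinearMap.adjoint (A' - A) y‖ ≤ LF * s' * M := by
    refine (ContinuousLinearMap.le_opNorm _ _).trans ?_
    rw [LinearIsometryEquiv.norm_map]
    exact mul_le_mul hA hy (norm_nonneg _) ((norm_nonneg _).trans hA)
  calc γ * ‖y' - y‖ ≤ ‖ContinuousLinearMap.adjoint A' (y' - y)‖ := hreg _
    _ ≤ ‖g' + ContinuousLinearMap.adjoint A' y'‖ + ‖g + ContinuousLinearMap.adjoint A y‖
        + ‖g' - g‖ + ‖ContinuousLinearMap.adjoint (A' - A) y‖ := by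
      rw [hsplit]
      refine (norm_sub_le _ _).trans (add_le_add_left ((norm_sub_le _ _).trans ?_) _)
      exact add_le_add_left (norm_sub_le _ _) _
    _ ≤ (b + L₀ + LF * M) * s' + b * s := by linarith

theorem descent_ineq_of_penalty_ge {a τ b c γ ρ t Δ Δ' : ℝ} (hγ : 0 < γ) (hρ : 0 < ρ)
    (hτa : τ < a / 2) (ht : 0 ≤ t) (hs : γ * (ρ * t) ≤ c * Δ + b * Δ')
    (hR : (2 * c ^ 2 + 2 * b ^ 2) / (γ ^ 2 * (a / 2 - τ)) ≤ ρ) :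
    τ * Δ ^ 2 + ρ * t ^ 2 + 2 * b ^ 2 / (ρ * γ ^ 2) * Δ ^ 2
      ≤ a / 2 * Δ ^ 2 + 2 * b ^ 2 / (ρ * γ ^ 2) * Δ' ^ 2 := by
  have hργ : 0 < ρ * γ ^ 2 := by positivity
  have hsq : γ ^ 2 * (ρ * t) ^ 2 ≤ 2 * c ^ 2 * Δ ^ 2 + 2 * b ^ 2 * Δ' ^ 2 := by
    nlinarith [pow_le_pow_left₀ (by positivity) hs 2, sq_nonneg (c * Δ - b * Δ')]
  have hR' : 2 * c ^ 2 + 2 * b ^ 2 ≤ ρ * (γ ^ 2 * (a / 2 - τ)) :=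
    (div_le_iff₀ (by nlinarith)).1 hR
  set β := 2 * b ^ 2 / (ρ * γ ^ 2)
  have hβ : β * (ρ * γ ^ 2) = 2 * b ^ 2 := div_mul_cancel₀ _ hργ.ne'
  refine le_of_mul_le_mul_right ?_ hργ
  nlinarith [mul_le_mul_of_nonneg_right hR' (sq_nonneg Δ)]

section AugmentedLagrangian

variable {n m : ℕ} {f₀ : EuclideanSpace ℝ (Fin n) → ℝ}
  {F : EuclideanSpace ℝ (Fin n) → EuclideanSpace ℝ (Fin m)} {h : EuclideanSpace ℝ (Fin m) → EReal}

theorem augLag_add_smul (ρ : ℝ) (x : EuclideanSpace ℝ (Fin n)) (u y : EuclideanSpace ℝ (Fin m)) :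
    augLag f₀ F h ρ x u (y + ρ • (F x - u))
      = augLag f₀ F h ρ x u y + ((ρ * ‖F x - u‖ ^ 2 : ℝ) : EReal) := by
  rw [augLag, augLag, add_right_comm _ (h u), ← EReal.coe_add, inner_add_left,
    real_inner_smul_left, real_inner_self_eq_norm_sq]
  congr 2
  ring

theorem lyap_descent_of_augLag_descent {ρ β τ a : ℝ} {x x' w : EuclideanSpace ℝ (Fin n)}
    {u u' y : EuclideanSpace ℝ (Fin m)}
    (hC1 : ((a / 2 * ‖x' - x‖ ^ 2 : ℝ) : EReal) + augLag f₀ F h ρ x' u' y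
      ≤ augLag f₀ F h ρ x u y)
    (hreal : τ * ‖x' - x‖ ^ 2 + ρ * ‖F x' - u'‖ ^ 2 + β * ‖x' - x‖ ^ 2
      ≤ a / 2 * ‖x' - x‖ ^ 2 + β * ‖x - w‖ ^ 2) :
    ((τ * ‖x' - x‖ ^ 2 : ℝ) : EReal) + lyap f₀ F h ρ β x' u' (y + ρ • (F x' - u')) x
      ≤ lyap f₀ F h ρ β x u y w := by
  rw [lyap, lyap, augLag_add_smul]
  calc
    _ = ((τ * ‖x' - x‖ ^ 2 + ρ * ‖F x' - u'‖ ^ 2 + β * ‖x' - x‖ ^ 2 : ℝ) : EReal)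
        + augLag f₀ F h ρ x' u' y := by
      simp only [EReal.coe_add]
      abel
    _ ≤ ((a / 2 * ‖x' - x‖ ^ 2 + β * ‖x - w‖ ^ 2 : ℝ) : EReal) + augLag f₀ F h ρ x' u' y := by
      gcongr
    _ = ((a / 2 * ‖x' - x‖ ^ 2 : ℝ) : EReal) + augLag f₀ F h ρ x' u' y
        + ((β * ‖x - w‖ ^ 2 : ℝ) : EReal) := by
      rw [EReal.coe_add]
      abel
    _ ≤ augLag f₀ F h ρ x u y + ((β * ‖x - w‖ ^ 2 : ℝ) : EReal) := by gcongr

theorem lyap_descent_of_stationarity {ρ γ τ a b L₀ LF M : ℝ} {w x x' : EuclideanSpace ℝ (Fin n)}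
    {u u' y : EuclideanSpace ℝ (Fin m)} (hγ : 0 < γ) (hρ : 0 < ρ) (hτa : τ < a / 2)
    (hreg : ∀ v, γ * ‖v‖ ≤ ‖ContinuousLinearMap.adjoint (fderiv ℝ F x') v‖)
    (hL0 : ‖gradient f₀ x' - gradient f₀ x‖ ≤ L₀ * ‖x' - x‖)
    (hLF : ‖fderiv ℝ F x' - fderiv ℝ F x‖ ≤ LF * ‖x' - x‖) (hy : ‖y‖ ≤ M)
    (hstat : ‖gradient f₀ x + ContinuousLinearMap.adjoint (fderiv ℝ F x) y‖ ≤ b * ‖x - w‖)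
    (hstat' : ‖gradient f₀ x' + ContinuousLinearMap.adjoint (fderiv ℝ F x') (y + ρ • (F x' - u'))‖
      ≤ b * ‖x' - x‖)
    (hC1 : ((a / 2 * ‖x' - x‖ ^ 2 : ℝ) : EReal) + augLag f₀ F h ρ x' u' y
      ≤ augLag f₀ F h ρ x u y)
    (hR : (2 * (b + L₀ + LF * M) ^ 2 + 2 * b ^ 2) / (γ ^ 2 * (a / 2 - τ)) ≤ ρ) :
    ((τ * ‖x' - x‖ ^ 2 : ℝ) : EReal)
        + lyap f₀ F h ρ (2 * b ^ 2 / (ρ * γ ^ 2)) x' u' (y + ρ • (F x' - u')) x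
      ≤ lyap f₀ F h ρ (2 * b ^ 2 / (ρ * γ ^ 2)) x u y w := by
  have hs := mul_norm_sub_le_of_stationarity hreg hstat hstat' hL0 hLF hy
  rw [add_sub_cancel_left, norm_smul, Real.norm_of_nonneg hρ.le] at hs
  exact lyap_descent_of_augLag_descent hC1
    (descent_ineq_of_penalty_ge hγ hρ hτa (norm_nonneg _) hs hR)

end AugmentedLagrangian

/-- The descent test of the penalty update (iv) at step `k`. -/
def LyapDecreasesAt {n m : ℕ} (f₀ : EuclideanSpace ℝ (Fin n) → ℝ)
    (F : EuclideanSpace ℝ (Fin n) → EuclideanSpace ℝ (Fin m))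
    (h : EuclideanSpace ℝ (Fin m) → EReal) (ρ β τ : ℝ) (x : ℕ → EuclideanSpace ℝ (Fin n))
    (u y : ℕ → EuclideanSpace ℝ (Fin m)) (k : ℕ) : Prop :=
  ((τ * ‖x (k + 1) - x k‖ ^ 2 : ℝ) : EReal)
      + lyap f₀ F h ρ β (x (k + 1)) (u (k + 1)) (y (k + 1)) (x k)
    ≤ lyap f₀ F h ρ β (x k) (u k) (y k) (x (k - 1))

theorem penalty_stabilization_general {n m : ℕ}
    (f₀ : EuclideanSpace ℝ (Fin n) → ℝ)
    (F : EuclideanSpace ℝ (Fin n) → EuclideanSpace ℝ (Fin m))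
    (h : EuclideanSpace ℝ (Fin m) → EReal)
    (dbar : ℝ) (hdbar : 0 < dbar)
    (Z : Set (EuclideanSpace ℝ (Fin n)))
    (hZ : {x | Metric.infDist (F x) {u | h u ≠ ⊤} ≤ dbar} ⊆ Z)
    (γ LF L₀ : ℝ) (hγ : 0 < γ)
    (hreg : ∀ x ∈ Z, ∀ v : EuclideanSpace ℝ (Fin m),
      γ * ‖v‖ ≤ ‖(ContinuousLinearMap.adjoint (fderiv ℝ F x)) v‖)
    (hLF : ∀ x ∈ Z, ∀ x' ∈ Z, ‖fderiv ℝ F x - fderiv ℝ F x'‖ ≤ LF * ‖x - x'‖)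
    (hL0 : ∀ x ∈ Z, ∀ x' ∈ Z, ‖gradient f₀ x - gradient f₀ x'‖ ≤ L₀ * ‖x - x'‖)
    (a b τ δ ρ₀ : ℝ) (hτa : τ < a / 2)
    (hδ : 0 < δ) (hρ₀ : 0 < ρ₀)
    (x : ℕ → EuclideanSpace ℝ (Fin n)) (u y : ℕ → EuclideanSpace ℝ (Fin m)) (ρ : ℕ → ℝ)
    (hu : ∀ k, h (u k) ≠ ⊤) (hρ : ∀ k, ρ₀ ≤ ρ k)
    -- (i) multiplier update
    (hmult : ∀ k, y (k + 1) = y k + ρ k • (F (x (k + 1)) - u (k + 1)))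
    -- (ii) sufficient decrease of the augmented Lagrangian in the primal variables (C1)
    (hC1 : ∀ k, ((a / 2 * ‖x (k + 1) - x k‖ ^ 2 : ℝ) : EReal)
        + augLag f₀ F h (ρ k) (x (k + 1)) (u (k + 1)) (y k)
      ≤ augLag f₀ F h (ρ k) (x k) (u k) (y k))
    -- (iii) gradient bound (C2)
    (hC2 : ∀ k, ‖gradient f₀ (x (k + 1)) + (ContinuousLinearMap.adjoint (fderiv ℝ F (x (k + 1))))
        (y k + ρ k • (F (x (k + 1)) - u (k + 1)))‖ ≤ b * ‖x (k + 1) - x k‖)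
    -- (iv) adaptive update of the penalty parameter, with β_k = 2b²/(ρ_k γ²)
    (hadapt : ∀ k, 1 ≤ k →
      ((x (k + 1) ∉ Z ∨
          ¬ (((τ * ‖x (k + 1) - x k‖ ^ 2 : ℝ) : EReal)
              + lyap f₀ F h (ρ k) (2 * b ^ 2 / (ρ k * γ ^ 2))
                  (x (k + 1)) (u (k + 1)) (y (k + 1)) (x k)
            ≤ lyap f₀ F h (ρ k) (2 * b ^ 2 / (ρ k * γ ^ 2)) (x k) (u k) (y k) (x (k - 1))))
        → ρ (k + 1) = ρ k + δ) ∧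
      ((x (k + 1) ∈ Z ∧
          ((τ * ‖x (k + 1) - x k‖ ^ 2 : ℝ) : EReal)
              + lyap f₀ F h (ρ k) (2 * b ^ 2 / (ρ k * γ ^ 2))
                  (x (k + 1)) (u (k + 1)) (y (k + 1)) (x k)
            ≤ lyap f₀ F h (ρ k) (2 * b ^ 2 / (ρ k * γ ^ 2)) (x k) (u k) (y k) (x (k - 1)))
        → ρ (k + 1) = ρ k))
    -- (v) bounded multipliers
    (M : ℝ) (hM : ∀ k, ‖y k‖ ≤ M) :
    ∃ K : ℕ, 1 ≤ K ∧ (∀ k, K ≤ k → ρ k = ρ K) ∧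
      ∀ k, K ≤ k → x k ∈ Z ∧
        ((τ * ‖x (k + 1) - x k‖ ^ 2 : ℝ) : EReal)
            + lyap f₀ F h (ρ K) (2 * b ^ 2 / (ρ K * γ ^ 2))
                (x (k + 1)) (u (k + 1)) (y (k + 1)) (x k)
          ≤ lyap f₀ F h (ρ K) (2 * b ^ 2 / (ρ K * γ ^ 2)) (x k) (u k) (y k) (x (k - 1)) := by
  have hρpos k : 0 < ρ k := hρ₀.trans_le (hρ k)
  set R := max (2 * M / dbar) ((2 * (b + L₀ + LF * M) ^ 2 + 2 * b ^ 2) / (γ ^ 2 * (a / 2 - τ)))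
  have hzone k (hk : 2 * M / dbar ≤ ρ k) : x (k + 1) ∈ Z := by
    refine hZ ((Metric.infDist_le_dist_of_mem (hu (k + 1))).trans ?_)
    rw [dist_eq_norm]
    exact norm_le_of_eq_add_smul (hρpos k) (hmult k) (hM k) (hM (k + 1))
      (by rw [div_le_iff₀ hdbar] at hk; linarith)
  have hgood k (h₁ : R ≤ ρ k) (h₂ : R ≤ ρ (k + 1)) : x (k + 2) ∈ Z ∧
      LyapDecreasesAt f₀ F h (ρ (k + 1)) (2 * b ^ 2 / (ρ (k + 1) * γ ^ 2)) τ x u y (k + 1) := by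
    have hx := hzone k ((le_max_left _ _).trans h₁)
    have hx' := hzone (k + 1) ((le_max_left _ _).trans h₂)
    refine ⟨hx', ?_⟩
    rw [LyapDecreasesAt, hmult (k + 1)]
    exact lyap_descent_of_stationarity hγ (hρpos _) hτa (hreg _ hx') (hL0 _ hx' _ hx)
      (hLF _ hx' _ hx) (hM _) (hmult k ▸ hC2 k) (hC2 (k + 1)) (hC1 (k + 1))
      ((le_max_right _ _).trans h₂)
  obtain ⟨K, hK1, hK⟩ := exists_forall_ge_of_adaptive_penalty hδ
    (fun k hk hbad => (hadapt k hk).1 (not_and_or.mp hbad)) (fun k hk => (hadapt k hk).2) hgood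
  refine ⟨K, hK1, fun k hk => (hK k hk).1, fun k hk => ?_⟩
  obtain ⟨hρk, hprev, hcur⟩ := hK k hk
  refine ⟨Nat.sub_add_cancel (hK1.trans hk) ▸ hprev.1, ?_⟩
  rw [← hρk]
  exact hcur.2

/-- **Finite stabilization of the penalty sequence** (Lemma 4.4). For a Lagrangian sequence
generated by ALBUM with bounded multipliers, the penalty parameters are eventually constant,
the iterates eventually stay in the information zone `Z`, and from that index on the Lyapunov
function `E_{β_K,ρ_K}` decreases by at least `τ‖x^{k+1} − x^k‖²` at each step. -/
theorem penalty_stabilization {n m : ℕ}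
    (f₀ : EuclideanSpace ℝ (Fin n) → ℝ) (hf₀ : ContDiff ℝ 1 f₀)
    (F : EuclideanSpace ℝ (Fin n) → EuclideanSpace ℝ (Fin m)) (hF : ContDiff ℝ 1 F)
    (h : EuclideanSpace ℝ (Fin m) → EReal)
    (hproper : ∃ u, h u ≠ ⊤) (hnobot : ∀ u, h u ≠ ⊥) (hlsc : LowerSemicontinuous h)
    (dbar : ℝ) (hdbar : 0 < dbar)
    (Z : Set (EuclideanSpace ℝ (Fin n)))
    (hZ : {x | Metric.infDist (F x) {u | h u ≠ ⊤} ≤ dbar} ⊆ Z)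
    (γ LF L₀ : ℝ) (hγ : 0 < γ)
    (hreg : ∀ x ∈ Z, ∀ v : EuclideanSpace ℝ (Fin m),
      γ * ‖v‖ ≤ ‖(ContinuousLinearMap.adjoint (fderiv ℝ F x)) v‖)
    (hLF : ∀ x ∈ Z, ∀ x' ∈ Z, ‖fderiv ℝ F x - fderiv ℝ F x'‖ ≤ LF * ‖x - x'‖)
    (hL0 : ∀ x ∈ Z, ∀ x' ∈ Z, ‖gradient f₀ x - gradient f₀ x'‖ ≤ L₀ * ‖x - x'‖)
    (a b τ δ ρ₀ : ℝ) (ha : 0 < a) (hb : 0 < b) (hτ : 0 < τ) (hτa : τ < a / 2)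
    (hδ : 0 < δ) (hρ₀ : 0 < ρ₀)
    (x : ℕ → EuclideanSpace ℝ (Fin n)) (u y : ℕ → EuclideanSpace ℝ (Fin m)) (ρ : ℕ → ℝ)
    (hu : ∀ k, h (u k) ≠ ⊤) (hρ : ∀ k, ρ₀ ≤ ρ k)
    -- (i) multiplier update
    (hmult : ∀ k, y (k + 1) = y k + ρ k • (F (x (k + 1)) - u (k + 1)))
    -- (ii) sufficient decrease of the augmented Lagrangian in the primal variables (C1)
    (hC1 : ∀ k, ((a / 2 * ‖x (k + 1) - x k‖ ^ 2 : ℝ) : EReal)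
        + augLag f₀ F h (ρ k) (x (k + 1)) (u (k + 1)) (y k)
      ≤ augLag f₀ F h (ρ k) (x k) (u k) (y k))
    -- (iii) gradient bound (C2)
    (hC2 : ∀ k, ‖gradient f₀ (x (k + 1)) + (ContinuousLinearMap.adjoint (fderiv ℝ F (x (k + 1))))
        (y k + ρ k • (F (x (k + 1)) - u (k + 1)))‖ ≤ b * ‖x (k + 1) - x k‖)
    -- (iv) adaptive update of the penalty parameter, with β_k = 2b²/(ρ_k γ²)
    (hadapt : ∀ k, 1 ≤ k →
      ((x (k + 1) ∉ Z ∨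
          ¬ (((τ * ‖x (k + 1) - x k‖ ^ 2 : ℝ) : EReal)
              + lyap f₀ F h (ρ k) (2 * b ^ 2 / (ρ k * γ ^ 2))
                  (x (k + 1)) (u (k + 1)) (y (k + 1)) (x k)
            ≤ lyap f₀ F h (ρ k) (2 * b ^ 2 / (ρ k * γ ^ 2)) (x k) (u k) (y k) (x (k - 1))))
        → ρ (k + 1) = ρ k + δ) ∧
      ((x (k + 1) ∈ Z ∧
          ((τ * ‖x (k + 1) - x k‖ ^ 2 : ℝ) : EReal)
              + lyap f₀ F h (ρ k) (2 * b ^ 2 / (ρ k * γ ^ 2))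
                  (x (k + 1)) (u (k + 1)) (y (k + 1)) (x k)
            ≤ lyap f₀ F h (ρ k) (2 * b ^ 2 / (ρ k * γ ^ 2)) (x k) (u k) (y k) (x (k - 1)))
        → ρ (k + 1) = ρ k))
    -- (v) bounded multipliers
    (M : ℝ) (hM : ∀ k, ‖y k‖ ≤ M) :
    ∃ K : ℕ, 1 ≤ K ∧ (∀ k, K ≤ k → ρ k = ρ K) ∧
      ∀ k, K ≤ k → x k ∈ Z ∧
        ((τ * ‖x (k + 1) - x k‖ ^ 2 : ℝ) : EReal)
            + lyap f₀ F h (ρ K) (2 * b ^ 2 / (ρ K * γ ^ 2))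
                (x (k + 1)) (u (k + 1)) (y (k + 1)) (x k)
          ≤ lyap f₀ F h (ρ K) (2 * b ^ 2 / (ρ K * γ ^ 2)) (x k) (u k) (y k) (x (k - 1)) :=
  penalty_stabilization_general f₀ F h dbar hdbar Z hZ γ LF L₀ hγ hreg hLF hL0 a b τ δ ρ₀ hτa hδ hρ₀
    x u y ρ hu hρ hmult hC1 hC2 hadapt M hM
end

section
/- The joint proximal minimization step (ALBUM 1, proximal method of multipliers) is a Lagrangian algorithmic map with a = b = μ. Let f₀ : ℝ^n → ℝ and F : ℝ^n → ℝ^m be continuously differentiable, h : ℝ^m → (−∞,+∞] proper lsc, ρ, μ > 0, and fix x̄ ∈ ℝ^n, ū ∈ dom h, y ∈ ℝ^m. Suppose (x⁺, u⁺) is a global minimizer over ℝ^n × ℝ^m of (x,u) ↦ L_ρ(x, u, y) + (μ/2)‖x − x̄‖². Then: (i) (μ/2)‖x⁺ − x̄‖² + L_ρ(x⁺, u⁺, y) ≤ L_ρ(x̄, ū, y); and (ii) ∇f₀(x⁺) + ∇F(x⁺)ᵀ(y + ρ(F(x⁺) − u⁺)) + μ(x⁺ − x̄) = 0, hence ‖∇ₓL_ρ(x⁺,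 u⁺, y)‖ = μ‖x⁺ − x̄‖. -/
/-!
Comparing `(x⁺, u⁺)` with the competitor `(x̄, ū)` gives the decrease inequality, and shows
that `h(u⁺)` is finite. Freezing `u = u⁺`, the point `x⁺` then minimizes the smooth real function
`x ↦ f₀(x) + ⟨y, F(x) − u⁺⟩ + (ρ/2)‖F(x) − u⁺‖² + (μ/2)‖x − x̄‖²`, so by Fermat's rule its
gradient `∇ₓL_ρ(x⁺, u⁺, y) + μ(x⁺ − x̄)` vanishes; the chain rule for gradients is where the
adjoint `∇F(x⁺)ᵀ` comes from.
-/

open scoped InnerProductSpace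

/-- `∇ₓL_ρ(x,u,y) = ∇f₀(x) + ∇F(x)ᵀ(y + ρ(F(x) − u))`. -/
noncomputable def gradLagx {n m : ℕ} (f₀ : EuclideanSpace ℝ (Fin n) → ℝ)
    (F : EuclideanSpace ℝ (Fin n) → EuclideanSpace ℝ (Fin m)) (ρ : ℝ)
    (x : EuclideanSpace ℝ (Fin n)) (u y : EuclideanSpace ℝ (Fin m)) :
    EuclideanSpace ℝ (Fin n) :=
  gradient f₀ x + (ContinuousLinearMap.adjoint (fderiv ℝ F x)) (y + ρ • (F x - u))

open InnerProductSpace ContinuousLinearMap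

section Gradient

variable {E G : Type*} [NormedAddCommGroup E] [InnerProductSpace ℝ E] [CompleteSpace E]
  [NormedAddCommGroup G] [InnerProductSpace ℝ G] [CompleteSpace G] {x : E}

theorem HasGradientAt.add {f g : E → ℝ} {f' g' : E} (hf : HasGradientAt f f' x)
    (hg : HasGradientAt g g' x) : HasGradientAt (fun x => f x + g x) (f' + g') x := by
  rw [hasGradientAt_iff_hasFDerivAt, map_add]
  exact hf.hasFDerivAt.add hg.hasFDerivAt

theorem IsLocalMin.hasGradientAt_eq_zero {f : E → ℝ} {f' : E} (h : IsLocalMin f x)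
    (hf : HasGradientAt f f' x) : f' = 0 :=
  (toDual ℝ E).map_eq_zero_iff.mp (h.hasFDerivAt_eq_zero hf)

theorem HasGradientAt.comp_hasFDerivAt {g : G → ℝ} {w : G} {F : E → G} {F' : E →L[ℝ] G}
    (hg : HasGradientAt g w (F x)) (hF : HasFDerivAt F F' x) :
    HasGradientAt (fun x => g (F x)) (adjoint F' w) x := by
  refine (hg.hasFDerivAt.comp x hF).congr_fderiv ?_
  ext v
  simp [adjoint_inner_left]

theorem hasGradientAt_half_mul_norm_sq_sub (c : ℝ) (a z : E) :
    HasGradientAt (fun z => c / 2 * ‖z - a‖ ^ 2) (c • (z - a)) z := by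
  refine ((((hasFDerivAt_id z).sub_const a).norm_sq).const_mul (c / 2)).congr_fderiv ?_
  ext v
  simp only [id_eq, comp_id, smul_apply, coe_innerSL_apply, nsmul_eq_mul, Nat.cast_ofNat,
    smul_eq_mul, map_smul, toDual_apply_apply]
  ring

theorem hasGradientAt_inner_sub_add_half_mul_norm_sq (y u z : E) (ρ : ℝ) :
    HasGradientAt (fun z => ⟪y, z - u⟫_ℝ + ρ / 2 * ‖z - u‖ ^ 2) (y + ρ • (z - u)) z := by
  refine HasGradientAt.add ?_ (hasGradientAt_half_mul_norm_sq_sub ρ u z)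
  refine ((innerSL ℝ y).hasFDerivAt.comp z ((hasFDerivAt_id z).sub_const u)).congr_fderiv ?_
  ext v
  simp

theorem gradient_add_adjoint_fderiv_add_smul_eq_zero_of_isLocalMin {f₀ : E → ℝ} {F : E → G}
    {y u : G} {ρ μ : ℝ} {xbar : E} (hf₀ : DifferentiableAt ℝ f₀ x) (hF : DifferentiableAt ℝ F x)
    (hmin : IsLocalMin
      (fun x => f₀ x + (⟪y, F x - u⟫_ℝ + ρ / 2 * ‖F x - u‖ ^ 2) + μ / 2 * ‖x - xbar‖ ^ 2) x) :
    gradient f₀ x + adjoint (fderiv ℝ F x) (y + ρ • (F x - u)) + μ • (x - xbar) = 0 :=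
  hmin.hasGradientAt_eq_zero <|
    (hf₀.hasGradientAt.add <| (hasGradientAt_inner_sub_add_half_mul_norm_sq y u (F x) ρ)
      |>.comp_hasFDerivAt hF.hasFDerivAt).add (hasGradientAt_half_mul_norm_sq_sub μ xbar x)

end Gradient

theorem norm_eq_mul_norm_of_add_smul_eq_zero {E : Type*} [NormedAddCommGroup E] [NormedSpace ℝ E]
    {g d : E} {μ : ℝ} (hμ : 0 ≤ μ) (h : g + μ • d = 0) : ‖g‖ = μ * ‖d‖ := by
  rw [eq_neg_of_add_eq_zero_left h, norm_neg, norm_smul, Real.norm_of_nonneg hμ]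

section AugLag

variable {n m : ℕ} {f₀ : EuclideanSpace ℝ (Fin n) → ℝ}
  {F : EuclideanSpace ℝ (Fin n) → EuclideanSpace ℝ (Fin m)} {h : EuclideanSpace ℝ (Fin m) → EReal}
  {ρ : ℝ} {x x' : EuclideanSpace ℝ (Fin n)} {u y : EuclideanSpace ℝ (Fin m)}

theorem augLag_eq_top_iff : augLag f₀ F h ρ x u y = ⊤ ↔ h u = ⊤ := by
  rw [augLag]
  induction h u using EReal.rec <;> simp [← EReal.coe_add]

theorem augLag_add_coe_le_augLag_add_coe_iff (hu : h u ≠ ⊤) (hu' : h u ≠ ⊥) {a b : ℝ} :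
    augLag f₀ F h ρ x u y + (a : EReal) ≤ augLag f₀ F h ρ x' u y + (b : EReal) ↔
      f₀ x + ⟪y, F x - u⟫_ℝ + ρ / 2 * ‖F x - u‖ ^ 2 + a ≤
        f₀ x' + ⟪y, F x' - u⟫_ℝ + ρ / 2 * ‖F x' - u‖ ^ 2 + b := by
  obtain ⟨c, hc⟩ : ∃ c : ℝ, h u = c := ⟨(h u).toReal, (EReal.coe_toReal hu hu').symm⟩
  simp only [augLag, hc, ← EReal.coe_add, EReal.coe_le_coe_iff]
  constructor <;> intro <;> linarith

end AugLag

theorem album1_is_lagrangian_map_general {n m : ℕ}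
    (f₀ : EuclideanSpace ℝ (Fin n) → ℝ) (hf₀ : ContDiff ℝ 1 f₀)
    (F : EuclideanSpace ℝ (Fin n) → EuclideanSpace ℝ (Fin m)) (hF : ContDiff ℝ 1 F)
    (h : EuclideanSpace ℝ (Fin m) → EReal)
    (hnobot : ∀ u, h u ≠ ⊥)
    (ρ μ : ℝ) (hμ : 0 < μ)
    (xbar : EuclideanSpace ℝ (Fin n)) (ubar y : EuclideanSpace ℝ (Fin m))
    (hubar : h ubar ≠ ⊤)
    (xp : EuclideanSpace ℝ (Fin n)) (up : EuclideanSpace ℝ (Fin m))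
    (hmin : ∀ (x' : EuclideanSpace ℝ (Fin n)) (u' : EuclideanSpace ℝ (Fin m)),
      augLag f₀ F h ρ xp up y + ((μ / 2 * ‖xp - xbar‖ ^ 2 : ℝ) : EReal)
        ≤ augLag f₀ F h ρ x' u' y + ((μ / 2 * ‖x' - xbar‖ ^ 2 : ℝ) : EReal)) :
    (((μ / 2 * ‖xp - xbar‖ ^ 2 : ℝ) : EReal) + augLag f₀ F h ρ xp up y
        ≤ augLag f₀ F h ρ xbar ubar y) ∧
    gradLagx f₀ F ρ xp up y + μ • (xp - xbar) = 0 ∧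
    ‖gradLagx f₀ F ρ xp up y‖ = μ * ‖xp - xbar‖ := by
  have decrease : ((μ / 2 * ‖xp - xbar‖ ^ 2 : ℝ) : EReal) + augLag f₀ F h ρ xp up y
      ≤ augLag f₀ F h ρ xbar ubar y := by
    simpa [add_comm] using hmin xbar ubar
  have hup : h up ≠ ⊤ := fun htop => hubar <| augLag_eq_top_iff.mp <| top_le_iff.mp <| by
    rwa [augLag_eq_top_iff.mpr htop, EReal.coe_add_top] at decrease
  have stationary : gradLagx f₀ F ρ xp up y + μ • (xp - xbar) = 0 := by
    refine gradient_add_adjoint_fderiv_add_smul_eq_zero_of_isLocalMin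
      (hf₀.differentiable one_ne_zero xp) (hF.differentiable one_ne_zero xp)
      (Filter.Eventually.of_forall fun x' => ?_)
    have := (augLag_add_coe_le_augLag_add_coe_iff hup (hnobot up)).mp (hmin x' up)
    dsimp only
    linarith
  exact ⟨decrease, stationary, norm_eq_mul_norm_of_add_smul_eq_zero hμ.le stationary⟩

/-- **ALBUM 1 (proximal method of multipliers) is a Lagrangian algorithmic map with
`a = b = μ`** : if `(x⁺,u⁺)` jointly minimizes `(x,u) ↦ L_ρ(x,u,y) + (μ/2)‖x − x̄‖²`, then
the sufficient decrease property and the exact gradient identity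
`‖∇ₓL_ρ(x⁺,u⁺,y)‖ = μ‖x⁺ − x̄‖` hold. -/
theorem album1_is_lagrangian_map {n m : ℕ}
    (f₀ : EuclideanSpace ℝ (Fin n) → ℝ) (hf₀ : ContDiff ℝ 1 f₀)
    (F : EuclideanSpace ℝ (Fin n) → EuclideanSpace ℝ (Fin m)) (hF : ContDiff ℝ 1 F)
    (h : EuclideanSpace ℝ (Fin m) → EReal)
    (hproper : ∃ u, h u ≠ ⊤) (hnobot : ∀ u, h u ≠ ⊥) (hlsc : LowerSemicontinuous h)
    (ρ μ : ℝ) (hρ : 0 < ρ) (hμ : 0 < μ)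
    (xbar : EuclideanSpace ℝ (Fin n)) (ubar y : EuclideanSpace ℝ (Fin m))
    (hubar : h ubar ≠ ⊤)
    (xp : EuclideanSpace ℝ (Fin n)) (up : EuclideanSpace ℝ (Fin m))
    (hmin : ∀ (x' : EuclideanSpace ℝ (Fin n)) (u' : EuclideanSpace ℝ (Fin m)),
      augLag f₀ F h ρ xp up y + ((μ / 2 * ‖xp - xbar‖ ^ 2 : ℝ) : EReal)
        ≤ augLag f₀ F h ρ x' u' y + ((μ / 2 * ‖x' - xbar‖ ^ 2 : ℝ) : EReal)) :
    (((μ / 2 * ‖xp - xbar‖ ^ 2 : ℝ) : EReal) + augLag f₀ F h ρ xp up y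
        ≤ augLag f₀ F h ρ xbar ubar y) ∧
    gradLagx f₀ F ρ xp up y + μ • (xp - xbar) = 0 ∧
    ‖gradLagx f₀ F ρ xp up y‖ = μ * ‖xp - xbar‖ :=
  album1_is_lagrangian_map_general f₀ hf₀ F hF h hnobot ρ μ hμ xbar ubar y hubar xp up hmin
end

section
/- Upper semicontinuity of h along ALBUM 2 iterates (Proposition 6.2 / P:ALBUM12C4, ALBUM 2 case). Let F : ℝ^n → ℝ^m be continuous, h : ℝ^m → (−∞,+∞] proper lsc, ρ > 0. Let sequences (x^k), (u^k), (y^k) be such that for each k, u^{k+1} is a global minimizer of u ↦ h(u) + ⟨y^k, F(x^k) − u⟩ + (ρ/2)‖F(x^k) − u‖². Suppose an index subsequence m_k → ∞ satisfies: x^{m_k − 1} → x̄, u^{m_k} → ū, and (y^{m_k − 1}) is bounded with u^{m_k} − ū → 0. Then limsup_{k→∞} h(u^{m_k}) ≤ h(ū). If in addition h is lower semicontinuous at ū, then h(u^{m_k}) → h(ū). -/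
/-!
Comparing the `u`-step minimizer `u^{m_k}` with the competitor `ū` gives
`h(u^{m_k}) ≤ h(ū) + c_k`, where `c_k` is the difference of the smooth parts of the two
objective values. Since `y^{m_k-1}` is bounded, `F(x^{m_k-1})` converges and `u^{m_k} → ū`,
`c_k → 0`, whence `limsup h(u^{m_k}) ≤ h(ū)`; lower semicontinuity at `ū` supplies the
matching `liminf` bound.
-/

open Filter Topology
open scoped InnerProductSpace

section AugmentedLagrangian

variable {E : Type*} [NormedAddCommGroup E] [InnerProductSpace ℝ E]

/-- The part of `L_ρ(x, u, y)` other than `f₀(x) + h(u)`, written with `w = F(x)`. -/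
noncomputable def augCoupling (ρ : ℝ) (y w u : E) : ℝ :=
  ⟪y, w - u⟫_ℝ + ρ / 2 * ‖w - u‖ ^ 2

lemma augCoupling_sub_augCoupling (ρ : ℝ) (y w u v : E) :
    augCoupling ρ y w v - augCoupling ρ y w u
      = ⟪y, u - v⟫_ℝ + ρ / 2 * (‖w - v‖ ^ 2 - ‖w - u‖ ^ 2) := by
  simp only [augCoupling, inner_sub_right]
  ring

lemma tendsto_inner_of_bounded_of_tendsto_zero {ι : Type*} {l : Filter ι} {y v : ι → E}
    {M : ℝ} (hy : ∀ k, ‖y k‖ ≤ M) (hv : Tendsto v l (𝓝 0)) :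
    Tendsto (fun k => ⟪y k, v k⟫_ℝ) l (𝓝 0) := by
  refine squeeze_zero_norm (fun k => ?_) (by simpa using hv.norm.const_mul M)
  calc ‖⟪y k, v k⟫_ℝ‖ ≤ ‖y k‖ * ‖v k‖ := norm_inner_le_norm _ _
    _ ≤ M * ‖v k‖ := mul_le_mul_of_nonneg_right (hy k) (norm_nonneg _)

lemma tendsto_augCoupling_sub {ι : Type*} {l : Filter ι} (ρ : ℝ) {y w u : ι → E} {w₀ u₀ : E}
    {M : ℝ} (hy : ∀ k, ‖y k‖ ≤ M) (hw : Tendsto w l (𝓝 w₀)) (hu : Tendsto u l (𝓝 u₀)) :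
    Tendsto (fun k => augCoupling ρ (y k) (w k) u₀ - augCoupling ρ (y k) (w k) (u k))
      l (𝓝 0) := by
  simp only [augCoupling_sub_augCoupling]
  have hinner : Tendsto (fun k => ⟪y k, u k - u₀⟫_ℝ) l (𝓝 0) :=
    tendsto_inner_of_bounded_of_tendsto_zero hy (by simpa using hu.sub_const u₀)
  have hsq : Tendsto (fun k => ‖w k - u₀‖ ^ 2 - ‖w k - u k‖ ^ 2) l (𝓝 0) := by
    simpa using ((hw.sub_const u₀).norm.pow 2).sub ((hw.sub hu).norm.pow 2)
  simpa using hinner.add (hsq.const_mul (ρ / 2))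

end AugmentedLagrangian

namespace EReal

lemma tendsto_add_coe_of_tendsto_zero {ι : Type*} {l : Filter ι} (a : EReal) {c : ι → ℝ}
    (hc : Tendsto c l (𝓝 0)) : Tendsto (fun k => a + (c k : EReal)) l (𝓝 a) := by
  have hadd : ContinuousAt (fun p : EReal × EReal => p.1 + p.2) (a, 0) :=
    continuousAt_add (Or.inr zero_ne_bot) (Or.inr zero_ne_top)
  simpa [Function.comp_def] using hadd.tendsto.comp (tendsto_const_nhds.prodMk_nhds (tendsto_coe.2 hc))

lemma limsup_le_of_eventually_add_coe_le {ι : Type*} {l : Filter ι} [l.NeBot]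
    {f : ι → EReal} {b : EReal} {A B : ι → ℝ}
    (hle : ∀ᶠ k in l, f k + (A k : EReal) ≤ b + (B k : EReal))
    (hAB : Tendsto (fun k => B k - A k) l (𝓝 0)) : limsup f l ≤ b := by
  have hf : ∀ᶠ k in l, f k ≤ b + ((B k - A k : ℝ) : EReal) := by
    filter_upwards [hle] with k hk
    rwa [← (addLECancellable_coe (A k)).add_le_add_iff_right, add_assoc, ← coe_add,
      _root_.sub_add_cancel]
  calc limsup f l ≤ limsup (fun k => b + ((B k - A k : ℝ) : EReal)) l := limsup_le_limsup hf
    _ = b := (tendsto_add_coe_of_tendsto_zero b hAB).limsup_eq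

end EReal

lemma LowerSemicontinuousAt.tendsto_comp_of_limsup_le {α β ι : Type*} [TopologicalSpace α]
    [CompleteLinearOrder β] [TopologicalSpace β] [OrderTopology β] {f : α → β} {a : α}
    {l : Filter ι} {v : ι → α} (hf : LowerSemicontinuousAt f a) (hv : Tendsto v l (𝓝 a))
    (hlim : limsup (f ∘ v) l ≤ f a) : Tendsto (f ∘ v) l (𝓝 (f a)) :=
  tendsto_of_le_liminf_of_limsup_le
    (hf.le_liminf.trans (liminf_le_liminf_of_le hv)) hlim

theorem album2_h_limsup_general {n m : ℕ}
    (F : EuclideanSpace ℝ (Fin n) → EuclideanSpace ℝ (Fin m)) (hF : Continuous F)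
    (h : EuclideanSpace ℝ (Fin m) → EReal)
    (ρ : ℝ)
    (x : ℕ → EuclideanSpace ℝ (Fin n)) (u y : ℕ → EuclideanSpace ℝ (Fin m))
    (hmin : ∀ k, ∀ u' : EuclideanSpace ℝ (Fin m),
      h (u (k + 1)) + ((⟪y k, F (x k) - u (k + 1)⟫_ℝ
          + ρ / 2 * ‖F (x k) - u (k + 1)‖ ^ 2 : ℝ) : EReal)
        ≤ h u' + ((⟪y k, F (x k) - u'⟫_ℝ + ρ / 2 * ‖F (x k) - u'‖ ^ 2 : ℝ) : EReal))
    (mseq : ℕ → ℕ) (hmseq : Filter.Tendsto mseq Filter.atTop Filter.atTop)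
    (xbar : EuclideanSpace ℝ (Fin n)) (ubar : EuclideanSpace ℝ (Fin m))
    (hx : Filter.Tendsto (fun k => x (mseq k - 1)) Filter.atTop (nhds xbar))
    (hu : Filter.Tendsto (fun k => u (mseq k)) Filter.atTop (nhds ubar))
    (M : ℝ) (hy : ∀ k, ‖y (mseq k - 1)‖ ≤ M) :
    Filter.limsup (fun k => h (u (mseq k))) Filter.atTop ≤ h ubar ∧
    (LowerSemicontinuousAt h ubar →
      Filter.Tendsto (fun k => h (u (mseq k))) Filter.atTop (nhds (h ubar))) := by
  have hcompare : ∀ᶠ k in atTop,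
      h (u (mseq k)) + (augCoupling ρ (y (mseq k - 1)) (F (x (mseq k - 1))) (u (mseq k)) : EReal)
        ≤ h ubar + (augCoupling ρ (y (mseq k - 1)) (F (x (mseq k - 1))) ubar : EReal) := by
    filter_upwards [hmseq.eventually_ge_atTop 1] with k hk
    have := hmin (mseq k - 1) ubar
    rwa [Nat.sub_add_cancel hk] at this
  have hlimsup : limsup (fun k => h (u (mseq k))) atTop ≤ h ubar :=
    EReal.limsup_le_of_eventually_add_coe_le hcompare
      (tendsto_augCoupling_sub ρ hy ((hF.tendsto xbar).comp hx) hu)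
  exact ⟨hlimsup, fun hlsc => hlsc.tendsto_comp_of_limsup_le hu hlimsup⟩

/-- **Upper semicontinuity of `h` along ALBUM 2 iterates** (Proposition 6.2, ALBUM 2 case).
If each `u^{k+1}` minimizes `u ↦ h(u) + ⟨y^k, F(x^k) − u⟩ + (ρ/2)‖F(x^k) − u‖²`, and along
a subsequence `m_k → ∞` we have `x^{m_k−1} → x̄`, `u^{m_k} → ū` and `(y^{m_k−1})` bounded,
then `limsup h(u^{m_k}) ≤ h(ū)`; if moreover `h` is lsc at `ū`, then `h(u^{m_k}) → h(ū)`. -/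
theorem album2_h_limsup {n m : ℕ}
    (F : EuclideanSpace ℝ (Fin n) → EuclideanSpace ℝ (Fin m)) (hF : Continuous F)
    (h : EuclideanSpace ℝ (Fin m) → EReal)
    (hproper : ∃ u, h u ≠ ⊤) (hnobot : ∀ u, h u ≠ ⊥) (hlsc : LowerSemicontinuous h)
    (ρ : ℝ) (hρ : 0 < ρ)
    (x : ℕ → EuclideanSpace ℝ (Fin n)) (u y : ℕ → EuclideanSpace ℝ (Fin m))
    (hmin : ∀ k, ∀ u' : EuclideanSpace ℝ (Fin m),
      h (u (k + 1)) + ((⟪y k, F (x k) - u (k + 1)⟫_ℝ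
          + ρ / 2 * ‖F (x k) - u (k + 1)‖ ^ 2 : ℝ) : EReal)
        ≤ h u' + ((⟪y k, F (x k) - u'⟫_ℝ + ρ / 2 * ‖F (x k) - u'‖ ^ 2 : ℝ) : EReal))
    (mseq : ℕ → ℕ) (hmseq : Filter.Tendsto mseq Filter.atTop Filter.atTop)
    (xbar : EuclideanSpace ℝ (Fin n)) (ubar : EuclideanSpace ℝ (Fin m))
    (hx : Filter.Tendsto (fun k => x (mseq k - 1)) Filter.atTop (nhds xbar))
    (hu : Filter.Tendsto (fun k => u (mseq k)) Filter.atTop (nhds ubar))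
    (M : ℝ) (hy : ∀ k, ‖y (mseq k - 1)‖ ≤ M) :
    Filter.limsup (fun k => h (u (mseq k))) Filter.atTop ≤ h ubar ∧
    (LowerSemicontinuousAt h ubar →
      Filter.Tendsto (fun k => h (u (mseq k))) Filter.atTop (nhds (h ubar))) :=
  album2_h_limsup_general F hF h ρ x u y hmin mseq hmseq xbar ubar hx hu M hy
end

section
/- Classical ADM under strong convexity satisfies the sufficient-decrease condition C1 with a = σ (Section 6.3). Let f₀ : ℝ^n → ℝ and F : ℝ^n → ℝ^m be continuously differentiable, h : ℝ^m → (−∞,+∞] proper lsc, ρ, σ > 0, and fix x ∈ ℝ^n, u, y ∈ ℝ^m with u ∈ dom h. Suppose u⁺ is a global minimizer of u ↦ L_ρ(x, u, y); suppose the function x' ↦ L_ρ(x', u⁺, y) is σ-strongly convex (i.e. x' ↦ L_ρ(x', u⁺, y) − (σ/2)‖x'‖² is convex) and x⁺ satisfies ∇ₓL_ρ(x⁺, u⁺, y) = 0. Then (σ/2)‖x⁺ − x‖² + L_ρ(x⁺, u⁺, y) ≤ L_ρ(x, u, y). -/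
open scoped InnerProductSpace

/-! The smooth part `φ x' = L_ρ(x', u⁺, y) - h u⁺` has gradient `∇ₓL_ρ(x', u⁺, y)`, so `x⁺` is a
critical point of the `σ`-strongly convex `φ`; the first-order inequality for the convex
`φ - (σ/2)‖·‖²` at `x⁺` then gives the quadratic growth `φ x⁺ + (σ/2)‖x - x⁺‖² ≤ φ x`. Adding
`h u⁺` turns the right side into `L_ρ(x, u⁺, y) ≤ L_ρ(x, u, y)`, by minimality of `u⁺`. -/

open Set

theorem ConvexOn.le_sub_of_hasFDerivAt {E : Type*} [NormedAddCommGroup E] [NormedSpace ℝ E]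
    {s : Set E} {ψ : E → ℝ} {ψ' : E →L[ℝ] ℝ} {a b : E}
    (hψ : ConvexOn ℝ s ψ) (ha : a ∈ s) (hb : b ∈ s) (hψ' : HasFDerivAt ψ ψ' a) :
    ψ' (b - a) ≤ ψ b - ψ a := by
  let ℓ : ℝ →ᵃ[ℝ] E := AffineMap.lineMap a b
  have hline : ConvexOn ℝ (ℓ ⁻¹' s) (ψ ∘ ℓ) := hψ.comp_affineMap ℓ
  have hderiv : HasDerivAt (ψ ∘ ℓ) (ψ' (b - a)) 0 := by
    refine HasFDerivAt.comp_hasDerivAt (0 : ℝ) ?_ AffineMap.hasDerivAt_lineMap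
    rwa [AffineMap.lineMap_apply_zero]
  simpa [ℓ, slope_def_field] using
    hline.le_slope_of_hasDerivAt (by simpa [ℓ] using ha) (by simpa [ℓ] using hb) zero_lt_one hderiv

theorem StrongConvexOn.quadratic_growth_of_hasFDerivAt_zero {E : Type*} [NormedAddCommGroup E]
    [InnerProductSpace ℝ E] {s : Set E} {σ : ℝ} {φ : E → ℝ} {a b : E}
    (hφ : StrongConvexOn s σ φ) (ha : a ∈ s) (hb : b ∈ s)
    (hcrit : HasFDerivAt φ (0 : E →L[ℝ] ℝ) a) :
    φ a + σ / 2 * ‖b - a‖ ^ 2 ≤ φ b := by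
  have hψ' : HasFDerivAt (fun x ↦ φ x - σ / 2 * ‖x‖ ^ 2) (0 - (σ / 2) • (2 • innerSL ℝ a)) a :=
    hcrit.sub ((hasStrictFDerivAt_norm_sq a).hasFDerivAt.const_mul (σ / 2))
  have hsupport := (strongConvexOn_iff_convex.1 hφ).le_sub_of_hasFDerivAt ha hb hψ'
  simp only [zero_sub, neg_apply, smul_apply, innerSL_apply_apply, smul_eq_mul, nsmul_eq_mul,
    inner_sub_right, real_inner_self_eq_norm_sq] at hsupport
  rw [norm_sub_sq_real, real_inner_comm]
  linarith

noncomputable def augLagSmooth {n m : ℕ} (f₀ : EuclideanSpace ℝ (Fin n) → ℝ)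
    (F : EuclideanSpace ℝ (Fin n) → EuclideanSpace ℝ (Fin m)) (ρ : ℝ)
    (x : EuclideanSpace ℝ (Fin n)) (u y : EuclideanSpace ℝ (Fin m)) : ℝ :=
  f₀ x + ⟪y, F x - u⟫_ℝ + ρ / 2 * ‖F x - u‖ ^ 2

theorem augLag_eq_augLagSmooth_add {n m : ℕ} (f₀ : EuclideanSpace ℝ (Fin n) → ℝ)
    (F : EuclideanSpace ℝ (Fin n) → EuclideanSpace ℝ (Fin m))
    (h : EuclideanSpace ℝ (Fin m) → EReal) (ρ : ℝ)
    (x : EuclideanSpace ℝ (Fin n)) (u y : EuclideanSpace ℝ (Fin m)) :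
    augLag f₀ F h ρ x u y = (augLagSmooth f₀ F ρ x u y : EReal) + h u :=
  rfl

theorem hasGradientAt_augLagSmooth {n m : ℕ} {f₀ : EuclideanSpace ℝ (Fin n) → ℝ}
    {F : EuclideanSpace ℝ (Fin n) → EuclideanSpace ℝ (Fin m)} {x : EuclideanSpace ℝ (Fin n)}
    (hf₀ : DifferentiableAt ℝ f₀ x) (hF : DifferentiableAt ℝ F x) (ρ : ℝ)
    (u y : EuclideanSpace ℝ (Fin m)) :
    HasGradientAt (fun x' ↦ augLagSmooth f₀ F ρ x' u y) (gradLagx f₀ F ρ x u y) x := by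
  have hG : HasFDerivAt (fun x' ↦ F x' - u) (fderiv ℝ F x) x := hF.hasFDerivAt.sub_const u
  have hsum := (hf₀.hasFDerivAt.add ((innerSL ℝ y).hasFDerivAt.comp x hG)).add
    (hG.norm_sq.const_mul (ρ / 2))
  rw [hasGradientAt_iff_hasFDerivAt]
  refine hsum.congr_fderiv ?_
  ext v
  simp only [gradLagx, map_add, add_apply, smul_apply, ContinuousLinearMap.comp_apply,
    coe_innerSL_apply, InnerProductSpace.toDual_apply_apply, toDual_gradient,
    ContinuousLinearMap.adjoint_inner_left, real_inner_smul_left, nsmul_eq_mul,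
    smul_eq_mul]
  ring

theorem adm_strong_convexity_C1_general {n m : ℕ}
    (f₀ : EuclideanSpace ℝ (Fin n) → ℝ) (hf₀ : ContDiff ℝ 1 f₀)
    (F : EuclideanSpace ℝ (Fin n) → EuclideanSpace ℝ (Fin m)) (hF : ContDiff ℝ 1 F)
    (h : EuclideanSpace ℝ (Fin m) → EReal)
    (ρ σ : ℝ)
    (x : EuclideanSpace ℝ (Fin n)) (u y : EuclideanSpace ℝ (Fin m))
    (up : EuclideanSpace ℝ (Fin m))
    (hminu : ∀ u' : EuclideanSpace ℝ (Fin m),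
      augLag f₀ F h ρ x up y ≤ augLag f₀ F h ρ x u' y)
    (hconv : ConvexOn ℝ Set.univ (fun x' : EuclideanSpace ℝ (Fin n) =>
      f₀ x' + ⟪y, F x' - up⟫_ℝ + ρ / 2 * ‖F x' - up‖ ^ 2 - σ / 2 * ‖x'‖ ^ 2))
    (xp : EuclideanSpace ℝ (Fin n)) (hcrit : gradLagx f₀ F ρ xp up y = 0) :
    ((σ / 2 * ‖xp - x‖ ^ 2 : ℝ) : EReal) + augLag f₀ F h ρ xp up y
      ≤ augLag f₀ F h ρ x u y := by
  have hgrad : HasGradientAt (fun x' ↦ augLagSmooth f₀ F ρ x' up y) 0 xp :=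
    hcrit ▸ hasGradientAt_augLagSmooth (hf₀.differentiable one_ne_zero xp)
      (hF.differentiable one_ne_zero xp) ρ up y
  have hgrowth :
      augLagSmooth f₀ F ρ xp up y + σ / 2 * ‖x - xp‖ ^ 2 ≤ augLagSmooth f₀ F ρ x up y :=
    (strongConvexOn_iff_convex (f := fun x' ↦ augLagSmooth f₀ F ρ x' up y)).2 hconv
      |>.quadratic_growth_of_hasFDerivAt_zero (mem_univ xp) (mem_univ x)
        (by simpa using hgrad.hasFDerivAt)
  calc ((σ / 2 * ‖xp - x‖ ^ 2 : ℝ) : EReal) + augLag f₀ F h ρ xp up y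
      = ((augLagSmooth f₀ F ρ xp up y + σ / 2 * ‖x - xp‖ ^ 2 : ℝ) : EReal) + h up := by
        rw [augLag_eq_augLagSmooth_add, ← add_assoc, ← EReal.coe_add, add_comm (σ / 2 * _),
          norm_sub_rev]
    _ ≤ augLag f₀ F h ρ x up y := by
        rw [augLag_eq_augLagSmooth_add]
        gcongr
    _ ≤ augLag f₀ F h ρ x u y := hminu u

/-- **Classical ADM under strong convexity satisfies the sufficient-decrease condition C1
with `a = σ`** (Section 6.3). If `u⁺` minimizes `u ↦ L_ρ(x,u,y)`, the function
`x' ↦ L_ρ(x',u⁺,y)` is `σ`-strongly convex, and `∇ₓL_ρ(x⁺,u⁺,y) = 0`, then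
`(σ/2)‖x⁺ − x‖² + L_ρ(x⁺,u⁺,y) ≤ L_ρ(x,u,y)`. -/
theorem adm_strong_convexity_C1 {n m : ℕ}
    (f₀ : EuclideanSpace ℝ (Fin n) → ℝ) (hf₀ : ContDiff ℝ 1 f₀)
    (F : EuclideanSpace ℝ (Fin n) → EuclideanSpace ℝ (Fin m)) (hF : ContDiff ℝ 1 F)
    (h : EuclideanSpace ℝ (Fin m) → EReal)
    (hproper : ∃ u, h u ≠ ⊤) (hnobot : ∀ u, h u ≠ ⊥) (hlsc : LowerSemicontinuous h)
    (ρ σ : ℝ) (hρ : 0 < ρ) (hσ : 0 < σ)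
    (x : EuclideanSpace ℝ (Fin n)) (u y : EuclideanSpace ℝ (Fin m)) (hu : h u ≠ ⊤)
    (up : EuclideanSpace ℝ (Fin m))
    (hminu : ∀ u' : EuclideanSpace ℝ (Fin m),
      augLag f₀ F h ρ x up y ≤ augLag f₀ F h ρ x u' y)
    (hconv : ConvexOn ℝ Set.univ (fun x' : EuclideanSpace ℝ (Fin n) =>
      f₀ x' + ⟪y, F x' - up⟫_ℝ + ρ / 2 * ‖F x' - up‖ ^ 2 - σ / 2 * ‖x'‖ ^ 2))
    (xp : EuclideanSpace ℝ (Fin n)) (hcrit : gradLagx f₀ F ρ xp up y = 0) :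
    ((σ / 2 * ‖xp - x‖ ^ 2 : ℝ) : EReal) + augLag f₀ F h ρ xp up y
      ≤ augLag f₀ F h ρ x u y :=
  adm_strong_convexity_C1_general f₀ hf₀ F hF h ρ σ x u y up hminu hconv xp hcrit
end

section
/- Determination of the penalty threshold for ALBUM 3 (Lemma 6.5 / L:ALBUM3Rho, algebraic form). Let ℓ > 0, γ > 0 and f ≥ γ be reals with f² < 2γ², and set η := 33γ² − 16f² (so η > 0) and ρ̄ := (8ℓ/(ηγ))(2γ + √(4γ² + η)). Then for every ρ > ρ̄: (i) Δ := ρ²γ²η − 32ργ²ℓ − 64ℓ² > 0; (ii) μ₁ := (17ργ² − 8ℓ − √Δ)/16 < μ₂ := (17ργ² − 8ℓ + √Δ)/16; and (iii) for every μ ∈ (μ₁, μ₂), setting t := μ − ργ², one has (1/2)(μ − (ℓ + ρf²)/2) − (2t² + 2(ℓ + t)²)/(ργ²) > 0. -/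
/-! The quantity to be shown positive equals `(Δ - (16μ - (17ργ² - 8ℓ))²) / (64ργ²)`, so it is
positive exactly when `16μ` lies within `√Δ` of `17ργ² - 8ℓ`, i.e. for `μ ∈ (μ₁, μ₂)`.
The discriminant `Δ`, as a quadratic in `ρ`, has `ρ̄` as its larger root, whence `Δ > 0`
for `ρ > ρ̄`. -/

open Real

lemma discriminant_pos_of_threshold_lt {l γ η ρ : ℝ} (hl : 0 ≤ l) (hγ : 0 < γ) (hη : 0 < η)
    (hρ : 8 * l / (η * γ) * (2 * γ + √(4 * γ ^ 2 + η)) < ρ) :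
    0 < ρ ^ 2 * γ ^ 2 * η - 32 * ρ * γ ^ 2 * l - 64 * l ^ 2 := by
  set s := √(4 * γ ^ 2 + η)
  have hs : s ^ 2 = 4 * γ ^ 2 + η := sq_sqrt (by positivity)
  have hfactor : η * (ρ ^ 2 * γ ^ 2 * η - 32 * ρ * γ ^ 2 * l - 64 * l ^ 2)
      = (ρ * η * γ - 8 * l * (2 * γ + s)) * (ρ * η * γ - 8 * l * (2 * γ - s)) := by
    linear_combination 64 * l ^ 2 * hs
  have hlarger : 0 < ρ * η * γ - 8 * l * (2 * γ + s) := by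
    rw [div_mul_eq_mul_div, div_lt_iff₀ (by positivity)] at hρ
    linarith
  have hsmaller : 0 < ρ * η * γ - 8 * l * (2 * γ - s) := by
    nlinarith [sqrt_nonneg (4 * γ ^ 2 + η)]
  exact (mul_pos_iff_of_pos_left hη).mp (hfactor ▸ mul_pos hlarger hsmaller)

lemma descent_quantity_eq {l γ f ρ : ℝ} (μ : ℝ) (hρ : ρ ≠ 0) (hγ : γ ≠ 0) :
    (1 / 2) * (μ - (l + ρ * f ^ 2) / 2)
        - (2 * (μ - ρ * γ ^ 2) ^ 2 + 2 * (l + (μ - ρ * γ ^ 2)) ^ 2) / (ρ * γ ^ 2)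
      = (ρ ^ 2 * γ ^ 2 * (33 * γ ^ 2 - 16 * f ^ 2) - 32 * ρ * γ ^ 2 * l - 64 * l ^ 2
          - (16 * μ - (17 * ρ * γ ^ 2 - 8 * l)) ^ 2) / (64 * (ρ * γ ^ 2)) := by
  field_simp
  ring

theorem album3_penalty_threshold_general (l γ f : ℝ)
    (hl : 0 < l) (hγ : 0 < γ) (hf2 : f ^ 2 < 2 * γ ^ 2) :
    0 < 33 * γ ^ 2 - 16 * f ^ 2 ∧
    ∀ ρ : ℝ,
      (8 * l / ((33 * γ ^ 2 - 16 * f ^ 2) * γ))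
          * (2 * γ + Real.sqrt (4 * γ ^ 2 + (33 * γ ^ 2 - 16 * f ^ 2))) < ρ →
      0 < ρ ^ 2 * γ ^ 2 * (33 * γ ^ 2 - 16 * f ^ 2) - 32 * ρ * γ ^ 2 * l - 64 * l ^ 2 ∧
      (17 * ρ * γ ^ 2 - 8 * l
          - Real.sqrt (ρ ^ 2 * γ ^ 2 * (33 * γ ^ 2 - 16 * f ^ 2)
              - 32 * ρ * γ ^ 2 * l - 64 * l ^ 2)) / 16
        < (17 * ρ * γ ^ 2 - 8 * l
          + Real.sqrt (ρ ^ 2 * γ ^ 2 * (33 * γ ^ 2 - 16 * f ^ 2)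
              - 32 * ρ * γ ^ 2 * l - 64 * l ^ 2)) / 16 ∧
      ∀ μ : ℝ,
        (17 * ρ * γ ^ 2 - 8 * l
            - Real.sqrt (ρ ^ 2 * γ ^ 2 * (33 * γ ^ 2 - 16 * f ^ 2)
                - 32 * ρ * γ ^ 2 * l - 64 * l ^ 2)) / 16 < μ →
        μ < (17 * ρ * γ ^ 2 - 8 * l
            + Real.sqrt (ρ ^ 2 * γ ^ 2 * (33 * γ ^ 2 - 16 * f ^ 2)
                - 32 * ρ * γ ^ 2 * l - 64 * l ^ 2)) / 16 →
        0 < (1 / 2) * (μ - (l + ρ * f ^ 2) / 2)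
          - (2 * (μ - ρ * γ ^ 2) ^ 2 + 2 * (l + (μ - ρ * γ ^ 2)) ^ 2) / (ρ * γ ^ 2) := by
  have hη : 0 < 33 * γ ^ 2 - 16 * f ^ 2 := by nlinarith
  refine ⟨hη, fun ρ hρ => ?_⟩
  have hρ0 : 0 < ρ := lt_of_le_of_lt (by positivity) hρ
  have hΔ := discriminant_pos_of_threshold_lt hl.le hγ hη hρ
  refine ⟨hΔ, by linarith [sqrt_pos.mpr hΔ], fun μ hμ₁ hμ₂ => ?_⟩
  rw [descent_quantity_eq μ hρ0.ne' hγ.ne']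
  exact div_pos (sub_pos.mpr (sq_lt.mpr ⟨by linarith, by linarith⟩)) (by positivity)

/-- **Determination of the penalty threshold for ALBUM 3** (Lemma 6.5, algebraic form).
Let `ℓ > 0`, `γ > 0`, `f ≥ γ` with `f² < 2γ²`, and set `η = 33γ² − 16f²` (so `η > 0`) and
`ρ̄ = (8ℓ/(ηγ))(2γ + √(4γ² + η))`. Then for every `ρ > ρ̄`: (i) the discriminant
`Δ = ρ²γ²η − 32ργ²ℓ − 64ℓ²` is positive; (ii) `μ₁ < μ₂` where
`μ₁ = (17ργ² − 8ℓ − √Δ)/16` and `μ₂ = (17ργ² − 8ℓ + √Δ)/16`; and (iii) for every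
`μ ∈ (μ₁, μ₂)`, with `t = μ − ργ²`, the sufficient descent quantity
`(1/2)(μ − (ℓ + ρf²)/2) − (2t² + 2(ℓ + t)²)/(ργ²)` is positive. -/
theorem album3_penalty_threshold (l γ f : ℝ)
    (hl : 0 < l) (hγ : 0 < γ) (hf : γ ≤ f) (hf2 : f ^ 2 < 2 * γ ^ 2) :
    0 < 33 * γ ^ 2 - 16 * f ^ 2 ∧
    ∀ ρ : ℝ,
      (8 * l / ((33 * γ ^ 2 - 16 * f ^ 2) * γ))
          * (2 * γ + Real.sqrt (4 * γ ^ 2 + (33 * γ ^ 2 - 16 * f ^ 2))) < ρ →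
      0 < ρ ^ 2 * γ ^ 2 * (33 * γ ^ 2 - 16 * f ^ 2) - 32 * ρ * γ ^ 2 * l - 64 * l ^ 2 ∧
      (17 * ρ * γ ^ 2 - 8 * l
          - Real.sqrt (ρ ^ 2 * γ ^ 2 * (33 * γ ^ 2 - 16 * f ^ 2)
              - 32 * ρ * γ ^ 2 * l - 64 * l ^ 2)) / 16
        < (17 * ρ * γ ^ 2 - 8 * l
          + Real.sqrt (ρ ^ 2 * γ ^ 2 * (33 * γ ^ 2 - 16 * f ^ 2)
              - 32 * ρ * γ ^ 2 * l - 64 * l ^ 2)) / 16 ∧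
      ∀ μ : ℝ,
        (17 * ρ * γ ^ 2 - 8 * l
            - Real.sqrt (ρ ^ 2 * γ ^ 2 * (33 * γ ^ 2 - 16 * f ^ 2)
                - 32 * ρ * γ ^ 2 * l - 64 * l ^ 2)) / 16 < μ →
        μ < (17 * ρ * γ ^ 2 - 8 * l
            + Real.sqrt (ρ ^ 2 * γ ^ 2 * (33 * γ ^ 2 - 16 * f ^ 2)
                - 32 * ρ * γ ^ 2 * l - 64 * l ^ 2)) / 16 →
        0 < (1 / 2) * (μ - (l + ρ * f ^ 2) / 2)
          - (2 * (μ - ρ * γ ^ 2) ^ 2 + 2 * (l + (μ - ρ * γ ^ 2)) ^ 2) / (ρ * γ ^ 2) :=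
  album3_penalty_threshold_general l γ f hl hγ hf2
end
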